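/- arXiv:0705.2915 — 2 statements merged into one kernel-verified Lean document; each statement's English description precedes it below -/
import Mathlib

section
/- Let T be an increasing tableau of shape ν/λ, R an increasing tableau of straight shape λ, and a ∈ ℕ. Let A be the subtableau of T with entries in {1,…,a} and B = T \ A the rest. Then K-infusion₁(R,T) = K-infusion₁(R,A) ∪ K-infusion₁(K-infusion₂(R,A), B). -/
open Finset
open scoped Classical

/-- A box of a Young diagram: (row, column), rows increasing downward. -/
abbrev Box : Type := ℕ × ℕ

/-- A Young diagram: a finite lower set in both coordinates. -/
def IsYoung (μ : Finset Box) : Prop :=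
  (∀ r c : ℕ, (r + 1, c) ∈ μ → (r, c) ∈ μ) ∧
  (∀ r c : ℕ, (r, c + 1) ∈ μ → (r, c) ∈ μ)

/-- Two boxes are adjacent (share an edge). -/
def adjB (a b : Box) : Prop :=
  (a.1 = b.1 ∧ (a.2 + 1 = b.2 ∨ b.2 + 1 = a.2)) ∨
  (a.2 = b.2 ∧ (a.1 + 1 = b.1 ∨ b.1 + 1 = a.1))

/-- Connectivity within a finite set of boxes. -/
def conn (S : Finset Box) (a b : Box) : Prop :=
  Relation.ReflTransGen (fun x y => x ∈ S ∧ y ∈ S ∧ adjB x y) a b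

/-- Entries strictly increase along rows and columns. -/
def IncreasingOn (dom : Finset Box) (f : Box → ℕ) : Prop :=
  (∀ r c : ℕ, (r, c) ∈ dom → (r, c + 1) ∈ dom → f (r, c) < f (r, c + 1)) ∧
  (∀ r c : ℕ, (r, c) ∈ dom → (r + 1, c) ∈ dom → f (r, c) < f (r + 1, c))

def maxEntry (dom : Finset Box) (f : Box → ℕ) : ℕ := dom.sup f

/-- An increasing tableau: positive entries, strictly increasing along rows and
columns, and every value `1,…,max` appears at least once. -/
def IsIncTab (dom : Finset Box) (f : Box → ℕ) : Prop :=
  IncreasingOn dom f ∧ (∀ b ∈ dom, 1 ≤ f b) ∧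
  (∀ v : ℕ, 1 ≤ v → v ≤ maxEntry dom f → ∃ b ∈ dom, f b = v)

/-- A standard Young tableau: an increasing tableau with distinct entries. -/
def IsSYT (dom : Finset Box) (f : Box → ℕ) : Prop :=
  IsIncTab dom f ∧ ∀ a ∈ dom, ∀ b ∈ dom, f a = f b → a = b

/-- An inner corner of `λ`: a maximally southeast box of `λ`. -/
def InnerCorner (lam : Finset Box) (x : Box) : Prop :=
  x ∈ lam ∧ (x.1 + 1, x.2) ∉ lam ∧ (x.1, x.2 + 1) ∉ lam

/-- An outer corner of `ν`: a maximally northwest box outside `ν`. -/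
def OuterCorner (nu : Finset Box) (x : Box) : Prop :=
  x ∉ nu ∧ (x.1 = 0 ∨ (x.1 - 1, x.2) ∈ nu) ∧ (x.2 = 0 ∨ (x.1, x.2 - 1) ∈ nu)

/-- No two boxes of `A` share a row or a column. -/
def NoTwoSameRowCol (A : Finset Box) : Prop :=
  ∀ a ∈ A, ∀ b ∈ A, a ≠ b → a.1 ≠ b.1 ∧ a.2 ≠ b.2

/-- One `switch` stage of a K-jdt slide: in the union of ribbons formed by the
•-boxes (`st.1`) and the boxes of the numerical region `st.2.1` with entry `i`,
swap the two symbols on every connected component with at least two boxes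
(single-box components are unchanged).  The state is (dots, numerical domain,
numerical entries). -/
noncomputable def switchStep (st : Finset Box × Finset Box × (Box → ℕ)) (i : ℕ) :
    Finset Box × Finset Box × (Box → ℕ) :=
  let dots := st.1
  let dom := st.2.1
  let f := st.2.2
  let S : Finset Box := dots ∪ dom.filter (fun b => f b = i)
  let sw : Box → Prop := fun b => ∃ b' ∈ S, b' ≠ b ∧ conn S b b'
  ( dom.filter (fun b => f b = i ∧ sw b) ∪ dots.filter (fun b => ¬ sw b),
    dom.filter (fun b => ¬ (f b = i ∧ sw b)) ∪ dots.filter sw,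
    fun b => if b ∈ dots ∧ sw b then i else f b )

/-- The state of a K-jdt slide started with •'s at `xs`, after processing the
values `1, 2, …, m`. -/
noncomputable def KState (xs dom : Finset Box) (f : Box → ℕ) (m : ℕ) :
    Finset Box × Finset Box × (Box → ℕ) :=
  (List.range m).foldl (fun st i => switchStep st (i + 1)) (xs, dom, f)

/-- The K-theoretic jeu de taquin slide of the tableau `(dom, f)` into the set
`xs` of inner corners: process the values `1,…,max` and discard the final •'s. -/
noncomputable def KJdt (xs dom : Finset Box) (f : Box → ℕ) : Finset Box × (Box → ℕ) :=
  ((KState xs dom f (maxEntry dom f)).2.1, (KState xs dom f (maxEntry dom f)).2.2)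

/-- The state of a reverse K-jdt slide: •'s start at `xs` (outer corners) and the
values `m, m-1, …, 1` are processed in decreasing order. -/
noncomputable def KRevState (xs dom : Finset Box) (f : Box → ℕ) (m : ℕ) :
    Finset Box × Finset Box × (Box → ℕ) :=
  (List.range m).foldr (fun i st => switchStep st (i + 1)) (xs, dom, f)

/-- A slide applied to the state (inner shape `λ`, tableau domain, entries). -/
noncomputable def doSlide (st : Finset Box × Finset Box × (Box → ℕ)) (xs : Finset Box) :
    Finset Box × Finset Box × (Box → ℕ) :=
  (st.1 \ xs, (KJdt xs st.2.1 st.2.2).1, (KJdt xs st.2.1 st.2.2).2)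

/-- A reverse slide applied to the state (inner shape `λ`, tableau domain, entries). -/
noncomputable def doRevSlide (st : Finset Box × Finset Box × (Box → ℕ)) (xs : Finset Box) :
    Finset Box × Finset Box × (Box → ℕ) :=
  (st.1 \ (KRevState xs st.2.1 st.2.2 (maxEntry st.2.1 st.2.2)).1,
   (KRevState xs st.2.1 st.2.2 (maxEntry st.2.1 st.2.2)).2.1,
   (KRevState xs st.2.1 st.2.2 (maxEntry st.2.1 st.2.2)).2.2)

/-- One step of a rectification: a K-jdt slide into a nonempty set of inner corners. -/
def RectStep (p q : Finset Box × Finset Box × (Box → ℕ)) : Prop :=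
  ∃ xs : Finset Box, xs.Nonempty ∧ (∀ x ∈ xs, InnerCorner p.1 x) ∧ q = doSlide p xs

/-- The tableau `(dom, f)` of shape `ν/λ` admits a rectification order ending at
the straight-shape tableau `(dom', f')`. -/
def RectTo (lam dom : Finset Box) (f : Box → ℕ) (dom' : Finset Box) (f' : Box → ℕ) : Prop :=
  ∃ g : Box → ℕ, Relation.ReflTransGen RectStep (lam, dom, f) (∅, dom', g) ∧
    ∀ b ∈ dom', g b = f' b

def rowLen (μ : Finset Box) (r : ℕ) : ℕ := (μ.filter (fun b => b.1 = r)).card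

/-- The superstandard tableau of straight shape `μ`: rows filled consecutively. -/
def sstd (μ : Finset Box) : Box → ℕ :=
  fun b => (∑ i ∈ Finset.range b.1, rowLen μ i) + b.2 + 1

/-- `a` occurs before `b` in the reading word (rows left to right, bottom to top). -/
def ReadBefore (a b : Box) : Prop := b.1 < a.1 ∨ (a.1 = b.1 ∧ a.2 < b.2)

/-- Length of the longest strictly increasing subsequence of the reading word. -/
noncomputable def LIS (dom : Finset Box) (f : Box → ℕ) : ℕ :=
  (dom.powerset.filter
    (fun I => ∀ a ∈ I, ∀ b ∈ I, ReadBefore a b → f a < f b)).sup Finset.card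

/-- One step of K-infusion: slide the boxes carrying the largest label `m` of the
inner tableau through the outer tableau, recording `m` at the vacated holes. -/
noncomputable def infusionStep
    (st : (Finset Box × (Box → ℕ)) × (Finset Box × (Box → ℕ)) × (Finset Box × (Box → ℕ))) :
    (Finset Box × (Box → ℕ)) × (Finset Box × (Box → ℕ)) × (Finset Box × (Box → ℕ)) :=
  let m := maxEntry st.1.1 st.1.2
  let xs := st.1.1.filter (fun b => st.1.2 b = m)
  let ks := KState xs st.2.1.1 st.2.1.2 (maxEntry st.2.1.1 st.2.1.2)
  ( (st.1.1 \ xs, st.1.2),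
    (ks.2.1, ks.2.2),
    (st.2.2.1 ∪ ks.1, fun b => if b ∈ ks.1 then m else st.2.2.2 b) )

/-- K-infusion of the pair `(T, U)`, where `U`'s shape extends `T`'s shape:
returns `(K-infusion₁(T,U), K-infusion₂(T,U))`. -/
noncomputable def KInfusion (Tdom : Finset Box) (Tf : Box → ℕ)
    (Udom : Finset Box) (Uf : Box → ℕ) :
    (Finset Box × (Box → ℕ)) × (Finset Box × (Box → ℕ)) :=
  ((infusionStep^[maxEntry Tdom Tf] ((Tdom, Tf), (Udom, Uf), (∅, fun _ => 0))).2.1,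
   (infusionStep^[maxEntry Tdom Tf] ((Tdom, Tf), (Udom, Uf), (∅, fun _ => 0))).2.2)

/-- `Δ(T)`: erase the entry `1` at the northwest corner, subtract one from the
remaining entries, and slide into the vacated corner. -/
noncomputable def Delta (p : Finset Box × (Box → ℕ)) : Finset Box × (Box → ℕ) :=
  KJdt {((0 : ℕ), (0 : ℕ))} (p.1.erase (0, 0)) (fun b => p.2 b - 1)

/-- K-evacuation: box `b` receives label `i` when `b` belongs to the shape of
`Δ^{i-1}(T)` but not to the shape of `Δ^{i}(T)`. -/
noncomputable def Kevac (p : Finset Box × (Box → ℕ)) : Box → ℕ :=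
  fun b => sInf {i : ℕ | b ∉ (Delta^[i] p).1}

/-- A horizontal strip: no two boxes in the same column. -/
def HorizontalStrip (dom : Finset Box) : Prop :=
  ∀ a ∈ dom, ∀ b ∈ dom, a ≠ b → a.2 ≠ b.2

def LeftmostIn (dom : Finset Box) (r c : ℕ) : Prop :=
  (r, c) ∈ dom ∧ ∀ c' < c, (r, c') ∉ dom

def RightmostIn (dom : Finset Box) (r c : ℕ) : Prop :=
  (r, c) ∈ dom ∧ ∀ c' > c, (r, c') ∉ dom

/-- A `t`-Pieri filling of a horizontal strip: entries of each row consecutive,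
the bottom row starts with `1`, each other row starts with the last entry of the
next nonempty row below it, or with that entry plus one; entries are `1,…,t`. -/
def IsPieri (dom : Finset Box) (f : Box → ℕ) (t : ℕ) : Prop :=
  HorizontalStrip dom ∧
  (∀ r c : ℕ, (r, c) ∈ dom → (r, c + 1) ∈ dom → f (r, c + 1) = f (r, c) + 1) ∧
  (∀ r c : ℕ, LeftmostIn dom r c → (∀ b ∈ dom, b.1 ≤ r) → f (r, c) = 1) ∧
  (∀ r c r' c' : ℕ, LeftmostIn dom r c → RightmostIn dom r' c' → r < r' →
    (∀ b ∈ dom, ¬ (r < b.1 ∧ b.1 < r')) →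
    (f (r, c) = f (r', c') ∨ f (r, c) = f (r', c') + 1)) ∧
  (∀ b ∈ dom, 1 ≤ f b ∧ f b ≤ t) ∧ (dom.Nonempty → ∃ b ∈ dom, f b = t)

/-- The domain of the one-row shape `(t)`. -/
def rowDom (t : ℕ) : Finset Box := (Finset.range t).image (fun c => ((0 : ℕ), c))

/-- The entries of the superstandard one-row tableau `S_(t)`. -/
def rowEnt : Box → ℕ := fun b => b.2 + 1

def numRows (dom : Finset Box) : ℕ := (dom.image Prod.fst).card

/-- The number of increasing tableaux of shape `ν/λ` whose K-rectification (for
some, equivalently by Theorem 1 any, rectification order) is the superstandard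
tableau `S_μ`.  Tableaux are normalized to vanish off their domain. -/
noncomputable def KrectCount (lam nu mu : Finset Box) : ℕ :=
  Set.ncard {f : Box → ℕ | (∀ b, b ∉ nu \ lam → f b = 0) ∧ IsIncTab (nu \ lam) f ∧
    ∃ g, Relation.ReflTransGen RectStep (lam, nu \ lam, f) (∅, mu, g) ∧
      ∀ b ∈ mu, g b = sstd mu b}

/-- Apply a (forward or reverse) K-jdt slide, as specified by `mv`. -/
noncomputable def applyMove (st : Finset Box × Finset Box × (Box → ℕ))
    (mv : Bool × Finset Box) : Finset Box × Finset Box × (Box → ℕ) :=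
  if mv.1 then doSlide st mv.2 else doRevSlide st mv.2

def ValidMove (st : Finset Box × Finset Box × (Box → ℕ)) (mv : Bool × Finset Box) : Prop :=
  mv.2.Nonempty ∧ (mv.1 = true → ∀ x ∈ mv.2, InnerCorner st.1 x) ∧
    (mv.1 = false → ∀ x ∈ mv.2, OuterCorner (st.1 ∪ st.2.1) x)

noncomputable def applySeq (L : List (Bool × Finset Box))
    (st : Finset Box × Finset Box × (Box → ℕ)) : Finset Box × Finset Box × (Box → ℕ) :=
  L.foldl applyMove st

def ValidSeq : List (Bool × Finset Box) → (Finset Box × Finset Box × (Box → ℕ)) → Prop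
  | [], _ => True
  | mv :: L, st => ValidMove st mv ∧ ValidSeq L (applyMove st mv)

/-- K-dual equivalence: every common sequence of (forward or reverse) slides
produces tableaux of the same shape. -/
def KDualEquiv (lam dom : Finset Box) (f g : Box → ℕ) : Prop :=
  ∀ L : List (Bool × Finset Box),
    ValidSeq L (lam, dom, f) → ValidSeq L (lam, dom, g) →
    (applySeq L (lam, dom, f)).2.1 = (applySeq L (lam, dom, g)).2.1

/-!
In a K-jdt slide the switches at values `≤ a` move only the boxes of `A` (and the •'s), the
later switches only those of `B`. So sliding `T = A ∪ B` into a set of corners is sliding `A`,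
followed by sliding `B` into the •'s where the slide of `A` ended. K-infusion slides the outer
tableau successively into the level sets of `R`, from the largest label down, and
K-infusion₂(R, A) records at label `i` exactly the •'s left by the slide of `A` into the level
set `i` of `R`. Hence infusing K-infusion₂(R, A) into `B` performs, step by step, the `B`-halves
of the slides of K-infusion(R, T).
-/

namespace KJdt

abbrev SlideState : Type := Finset Box × Finset Box × (Box → ℕ)

def level (T : Finset Box × (Box → ℕ)) (v : ℕ) : Finset Box :=
  T.1.filter (fun b => T.2 b = v)

def switchRegion (st : SlideState) (i : ℕ) : Finset Box := st.1 ∪ level st.2 i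

def Switches (S : Finset Box) (b : Box) : Prop := ∃ b' ∈ S, b' ≠ b ∧ conn S b b'

lemma switchStep_eq (st : SlideState) (i : ℕ) :
    switchStep st i =
      (st.2.1.filter (fun b => st.2.2 b = i ∧ Switches (switchRegion st i) b) ∪
         st.1.filter (fun b => ¬ Switches (switchRegion st i) b),
       st.2.1.filter (fun b => ¬ (st.2.2 b = i ∧ Switches (switchRegion st i) b)) ∪
         st.1.filter (fun b => Switches (switchRegion st i) b),
       fun b => if b ∈ st.1 ∧ Switches (switchRegion st i) b then i else st.2.2 b) := by
  simp only [switchStep]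
  refine Prod.ext ?_ (Prod.ext ?_ ?_)
  · ext b; simp only [Finset.mem_union, Finset.mem_filter, switchRegion, level, Switches]
  · ext b; simp only [Finset.mem_union, Finset.mem_filter, switchRegion, level, Switches]
  · funext b; exact if_congr Iff.rfl rfl rfl

def NoAdjacent (S : Finset Box) : Prop := ∀ x ∈ S, ∀ y ∈ S, ¬ adjB x y

lemma NoAdjacent.mono {S T : Finset Box} (h : NoAdjacent T) (hST : S ⊆ T) : NoAdjacent S :=
  fun x hx y hy => h x (hST hx) y (hST hy)

lemma adjB_symm {x y : Box} (h : adjB x y) : adjB y x := by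
  rcases h with ⟨h1, h2⟩ | ⟨h1, h2⟩
  · exact Or.inl ⟨h1.symm, h2.symm⟩
  · exact Or.inr ⟨h1.symm, h2.symm⟩

lemma conn_of_adjB {S : Finset Box} {x y : Box} (hx : x ∈ S) (hy : y ∈ S) (h : adjB x y) :
    conn S x y :=
  Relation.ReflTransGen.single ⟨hx, hy, h⟩

lemma eq_of_conn {S : Finset Box} (hS : NoAdjacent S) {x y : Box} (h : conn S x y) : x = y := by
  induction h with
  | refl => rfl
  | tail _ h _ => exact absurd h.2.2 (hS _ h.1 _ h.2.1)

lemma _root_.IncreasingOn.noAdjacent_level {dom : Finset Box} {f : Box → ℕ}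
    (hf : IncreasingOn dom f) (v : ℕ) : NoAdjacent (level (dom, f) v) := by
  rintro ⟨x1, x2⟩ hx ⟨y1, y2⟩ hy hadj
  obtain ⟨hx, hxv⟩ := Finset.mem_filter.1 hx
  obtain ⟨hy, hyv⟩ := Finset.mem_filter.1 hy
  rcases hadj with ⟨h1, h2 | h2⟩ | ⟨h1, h2 | h2⟩ <;> simp only at h1 h2 hxv hyv <;>
    subst h1 h2
  · exact (hf.1 _ _ hx hy).ne (hxv.trans hyv.symm)
  · exact (hf.1 _ _ hy hx).ne (hyv.trans hxv.symm)
  · exact (hf.2 _ _ hx hy).ne (hxv.trans hyv.symm)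
  · exact (hf.2 _ _ hy hx).ne (hyv.trans hxv.symm)

structure SlideInv (st : SlideState) : Prop where
  disjoint : Disjoint st.1 st.2.1
  dots : NoAdjacent st.1
  noAdjacent_level : ∀ i, NoAdjacent (level st.2 i)

lemma SlideInv.mono {d D D' : Finset Box} {f g : Box → ℕ} (h : SlideInv (d, D, f))
    (hD : D' ⊆ D) (hfg : ∀ b ∈ D', g b = f b) : SlideInv (d, D', g) := by
  refine ⟨h.disjoint.mono_right hD, h.dots, fun i => ?_⟩
  have hlev : level (D', g) i = D'.filter (fun b => f b = i) :=
    Finset.filter_congr fun b hb => by simp only [hfg b hb]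
  rw [hlev]
  exact (h.noAdjacent_level i).mono (Finset.filter_subset_filter _ hD)

section Switch

variable {st : SlideState} {i : ℕ}

lemma mem_switchRegion_of_dot {b : Box} (hb : b ∈ st.1) : b ∈ switchRegion st i :=
  Finset.mem_union_left _ hb

lemma mem_switchRegion_of_mem {b : Box} (hb : b ∈ st.2.1) (hfb : st.2.2 b = i) :
    b ∈ switchRegion st i :=
  Finset.mem_union_right _ (Finset.mem_filter.2 ⟨hb, hfb⟩)

lemma switches_of_adjB {x y : Box} (hx : x ∈ switchRegion st i) (hy : y ∈ switchRegion st i)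
    (hxy : adjB x y) : Switches (switchRegion st i) x :=
  ⟨y, hy, fun h => by subst h; rcases hxy with ⟨_, h⟩ | ⟨_, h⟩ <;> omega,
    conn_of_adjB hx hy hxy⟩

lemma disjoint_switchStep (h : Disjoint st.1 st.2.1) :
    Disjoint (switchStep st i).1 (switchStep st i).2.1 := by
  rw [switchStep_eq, Finset.disjoint_left]
  intro b hb hb'
  simp only [Finset.mem_union, Finset.mem_filter] at hb hb'
  rcases hb with ⟨hD, hc⟩ | ⟨hd, hs⟩ <;> rcases hb' with ⟨hD', hc'⟩ | ⟨hd', hs'⟩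
  · exact hc' hc
  · exact Finset.disjoint_left.1 h hd' hD
  · exact Finset.disjoint_left.1 h hd hD'
  · exact hs hs'

lemma noAdjacent_switchStep_dots (h : SlideInv st) : NoAdjacent (switchStep st i).1 := by
  intro x hx y hy hadj
  rw [switchStep_eq] at hx hy
  simp only [Finset.mem_union, Finset.mem_filter] at hx hy
  rcases hx with ⟨hxD, hxi, -⟩ | ⟨hxd, hxsw⟩ <;> rcases hy with ⟨hyD, hyi, -⟩ | ⟨hyd, hysw⟩
  · exact h.noAdjacent_level i x (Finset.mem_filter.2 ⟨hxD, hxi⟩) y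
      (Finset.mem_filter.2 ⟨hyD, hyi⟩) hadj
  · exact hysw (switches_of_adjB (mem_switchRegion_of_dot hyd)
      (mem_switchRegion_of_mem hxD hxi) (adjB_symm hadj))
  · exact hxsw (switches_of_adjB (mem_switchRegion_of_dot hxd)
      (mem_switchRegion_of_mem hyD hyi) hadj)
  · exact h.dots x hxd y hyd hadj

lemma noAdjacent_switchStep_level (h : SlideInv st) (j : ℕ) :
    NoAdjacent (level (switchStep st i).2 j) := by
  have hout : ∀ {b}, b ∈ st.2.1 → (switchStep st i).2.2 b = st.2.2 b := fun hb =>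
    if_neg fun hc => Finset.disjoint_left.1 h.disjoint hc.1 hb
  intro x hx y hy hadj
  obtain ⟨hx, hxj⟩ := Finset.mem_filter.1 hx
  obtain ⟨hy, hyj⟩ := Finset.mem_filter.1 hy
  rw [switchStep_eq] at hx hy
  simp only [Finset.mem_union, Finset.mem_filter] at hx hy
  rcases hx with ⟨hxD, hxc⟩ | ⟨hxd, hxsw⟩ <;> rcases hy with ⟨hyD, hyc⟩ | ⟨hyd, hysw⟩
  · rw [hout hxD] at hxj
    rw [hout hyD] at hyj
    exact h.noAdjacent_level j x (Finset.mem_filter.2 ⟨hxD, hxj⟩) y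
      (Finset.mem_filter.2 ⟨hyD, hyj⟩) hadj
  · have hxi : st.2.2 x = i := by
      rw [← hout hxD, hxj, ← hyj]; exact if_pos ⟨hyd, hysw⟩
    exact hxc ⟨hxi, switches_of_adjB (mem_switchRegion_of_mem hxD hxi)
      (mem_switchRegion_of_dot hyd) hadj⟩
  · have hyi : st.2.2 y = i := by
      rw [← hout hyD, hyj, ← hxj]; exact if_pos ⟨hxd, hxsw⟩
    exact hyc ⟨hyi, switches_of_adjB (mem_switchRegion_of_mem hyD hyi)
      (mem_switchRegion_of_dot hxd) (adjB_symm hadj)⟩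
  · exact h.dots x hxd y hyd hadj

lemma SlideInv.switchStep (h : SlideInv st) (i : ℕ) : SlideInv (switchStep st i) :=
  ⟨disjoint_switchStep h.disjoint, noAdjacent_switchStep_dots h, noAdjacent_switchStep_level h⟩

lemma not_switches_of_forall_ne (h : SlideInv st) (hi : ∀ b ∈ st.2.1, st.2.2 b ≠ i) (b : Box) :
    ¬ Switches (switchRegion st i) b := by
  have hS : switchRegion st i = st.1 := by
    rw [switchRegion, level, Finset.filter_false_of_mem hi, Finset.union_empty]
  rintro ⟨b', hb', hne, hc⟩
  rw [hS] at hb' hc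
  exact hne (eq_of_conn h.dots hc).symm

lemma switchStep_of_forall_ne (h : SlideInv st) (hi : ∀ b ∈ st.2.1, st.2.2 b ≠ i) :
    switchStep st i = st := by
  have hsw := not_switches_of_forall_ne h hi
  have hfi : ∀ b ∈ st.2.1, ¬ (st.2.2 b = i ∧ Switches (switchRegion st i) b) :=
    fun b hb hc => hi b hb hc.1
  rw [switchStep_eq]
  refine Prod.ext ?_ (Prod.ext ?_ ?_)
  · show _ ∪ _ = st.1
    rw [Finset.filter_false_of_mem hfi, Finset.filter_true_of_mem (fun b _ => hsw b),
      Finset.empty_union]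
  · show _ ∪ _ = st.2.1
    rw [Finset.filter_true_of_mem hfi, Finset.filter_false_of_mem (fun b _ => hsw b),
      Finset.union_empty]
  · funext b
    exact if_neg fun hc => hsw b hc.2

lemma switchStep_subset (st : SlideState) (i : ℕ) :
    (switchStep st i).1 ∪ (switchStep st i).2.1 ⊆ st.1 ∪ st.2.1 := by
  rw [switchStep_eq]
  intro b hb
  simp only [Finset.mem_union, Finset.mem_filter] at hb ⊢
  tauto

lemma switchStep_apply_of_notMem {b : Box} (hb : b ∉ st.1) :
    (switchStep st i).2.2 b = st.2.2 b :=
  if_neg fun hc => hb hc.1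

lemma forall_mem_switchStep_apply {p : ℕ → Prop} (h : ∀ b ∈ st.2.1, p (st.2.2 b)) (hi : p i) :
    ∀ b ∈ (switchStep st i).2.1, p ((switchStep st i).2.2 b) := by
  intro b hb
  rw [switchStep_eq] at hb ⊢
  simp only [Finset.mem_union, Finset.mem_filter] at hb
  show p (ite _ _ _)
  split_ifs with hc
  · exact hi
  · rcases hb with ⟨hbD, _⟩ | ⟨hbd, hsw⟩
    · exact h b hbD
    · exact absurd ⟨hbd, hsw⟩ hc

lemma switchStep_dots_nonempty (h : SlideInv st) (hd : st.1.Nonempty) (i : ℕ) :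
    (switchStep st i).1.Nonempty := by
  obtain ⟨b, hb⟩ := hd
  by_cases hsw : Switches (switchRegion st i) b
  · obtain ⟨b', -, hne, hc⟩ := hsw
    rcases Relation.ReflTransGen.cases_head hc with rfl | ⟨y, ⟨hbS, hyS, hadj⟩, _⟩
    · exact absurd rfl hne
    · rcases Finset.mem_union.1 hyS with hyd | hyD
      · exact absurd hadj (h.dots b hb y hyd)
      · obtain ⟨hy, hyi⟩ := Finset.mem_filter.1 hyD
        refine ⟨y, ?_⟩
        rw [switchStep_eq]
        exact Finset.mem_union_left _ (Finset.mem_filter.2 ⟨hy, hyi,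
          switches_of_adjB hyS hbS (adjB_symm hadj)⟩)
  · refine ⟨b, ?_⟩
    rw [switchStep_eq]
    exact Finset.mem_union_right _ (Finset.mem_filter.2 ⟨hb, hsw⟩)

end Switch

lemma switchStep_union_left {d P Q : Finset Box} {f : Box → ℕ} {i : ℕ}
    (hP : ∀ b ∈ P, f b ≠ i) :
    switchStep (d, P ∪ Q, f) i =
      ((switchStep (d, Q, f) i).1, P ∪ (switchStep (d, Q, f) i).2.1,
        (switchStep (d, Q, f) i).2.2) := by
  have hS : switchRegion (d, P ∪ Q, f) i = switchRegion (d, Q, f) i := by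
    simp only [switchRegion, level, Finset.filter_union]
    rw [Finset.filter_false_of_mem hP, Finset.empty_union]
  have hPi : ∀ b ∈ P, ¬ (f b = i ∧ Switches (switchRegion (d, Q, f) i) b) :=
    fun b hb hc => hP b hb hc.1
  simp only [switchStep_eq, hS]
  refine Prod.ext ?_ (Prod.ext ?_ rfl)
  · show _ ∪ _ = _ ∪ _
    rw [Finset.filter_union, Finset.filter_false_of_mem hPi, Finset.empty_union]
  · show _ ∪ _ = _ ∪ _
    rw [Finset.filter_union, Finset.filter_true_of_mem hPi, Finset.union_assoc]

lemma switchStep_union_right {d P Q : Finset Box} {f : Box → ℕ} {i : ℕ}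
    (hQ : ∀ b ∈ Q, f b ≠ i) :
    switchStep (d, P ∪ Q, f) i =
      ((switchStep (d, P, f) i).1, (switchStep (d, P, f) i).2.1 ∪ Q,
        (switchStep (d, P, f) i).2.2) := by
  have h := switchStep_union_left (d := d) (Q := P) hQ
  rw [Finset.union_comm P Q, h, Finset.union_comm]

noncomputable def slideFrom (st : SlideState) (j n : ℕ) : SlideState :=
  (List.range n).foldl (fun s k => switchStep s (j + k + 1)) st

section SlideFrom

variable {st : SlideState} {j n : ℕ}

lemma slideFrom_succ (st : SlideState) (j n : ℕ) :
    slideFrom st j (n + 1) = switchStep (slideFrom st j n) (j + n + 1) := by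
  rw [slideFrom, List.range_succ, List.foldl_append]
  rfl

lemma slideFrom_add (st : SlideState) (j m n : ℕ) :
    slideFrom st j (m + n) = slideFrom (slideFrom st j m) (j + m) n := by
  induction n with
  | zero => rfl
  | succ n ih =>
    rw [← Nat.add_assoc, slideFrom_succ, slideFrom_succ, ih]
    congr 1
    omega

lemma KState_eq_slideFrom (xs dom : Finset Box) (f : Box → ℕ) (m : ℕ) :
    KState xs dom f m = slideFrom (xs, dom, f) 0 m := by
  simp only [KState, slideFrom, Nat.zero_add]

lemma SlideInv.slideFrom (h : SlideInv st) (j n : ℕ) : SlideInv (slideFrom st j n) := by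
  induction n with
  | zero => exact h
  | succ n ih => rw [slideFrom_succ]; exact ih.switchStep _

lemma slideFrom_subset (st : SlideState) (j n : ℕ) :
    (slideFrom st j n).1 ∪ (slideFrom st j n).2.1 ⊆ st.1 ∪ st.2.1 := by
  induction n with
  | zero => exact subset_rfl
  | succ n ih => rw [slideFrom_succ]; exact (switchStep_subset _ _).trans ih

lemma slideFrom_apply_of_notMem {b : Box} (hb : b ∉ st.1 ∪ st.2.1) (j n : ℕ) :
    (slideFrom st j n).2.2 b = st.2.2 b := by
  induction n with
  | zero => rfl
  | succ n ih =>
    rw [slideFrom_succ, switchStep_apply_of_notMem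
      fun hd => hb (slideFrom_subset st j n (Finset.mem_union_left _ hd)), ih]

lemma slideFrom_le {c : ℕ} (h : ∀ b ∈ st.2.1, st.2.2 b ≤ c) (hc : j + n ≤ c) :
    ∀ b ∈ (slideFrom st j n).2.1, (slideFrom st j n).2.2 b ≤ c := by
  induction n with
  | zero => exact h
  | succ n ih =>
    rw [slideFrom_succ]
    exact forall_mem_switchStep_apply (p := (· ≤ c)) (ih (by omega)) (by omega)

lemma lt_slideFrom {c : ℕ} (h : ∀ b ∈ st.2.1, c < st.2.2 b) (hc : c ≤ j) :
    ∀ b ∈ (slideFrom st j n).2.1, c < (slideFrom st j n).2.2 b := by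
  induction n with
  | zero => exact h
  | succ n ih =>
    rw [slideFrom_succ]
    exact forall_mem_switchStep_apply (p := (c < ·)) ih (by omega)

lemma slideFrom_of_forall_notMem_Ioc (h : SlideInv st)
    (hv : ∀ b ∈ st.2.1, st.2.2 b ∉ Finset.Ioc j (j + n)) : slideFrom st j n = st := by
  induction n with
  | zero => rfl
  | succ n ih =>
    rw [slideFrom_succ, ih fun b hb hc => hv b hb (Finset.Ioc_subset_Ioc_right (by omega) hc)]
    exact switchStep_of_forall_ne h fun b hb he => hv b hb (by simp [he])

lemma slideFrom_dots_nonempty (h : SlideInv st) (hd : st.1.Nonempty) (j n : ℕ) :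
    (slideFrom st j n).1.Nonempty := by
  induction n with
  | zero => exact hd
  | succ n ih => rw [slideFrom_succ]; exact switchStep_dots_nonempty (h.slideFrom j n) ih _

lemma slideFrom_union_right {d P Q : Finset Box} {g : Box → ℕ} {a : ℕ}
    (hQ : ∀ b ∈ Q, a < g b) (hdisj : Disjoint (d ∪ P) Q) (hn : n ≤ a) :
    slideFrom (d, P ∪ Q, g) 0 n =
      ((slideFrom (d, P, g) 0 n).1, (slideFrom (d, P, g) 0 n).2.1 ∪ Q,
        (slideFrom (d, P, g) 0 n).2.2) := by
  induction n with
  | zero => rfl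
  | succ n ih =>
    rw [slideFrom_succ, slideFrom_succ, ih (by omega), switchStep_union_right]
    intro b hb
    rw [slideFrom_apply_of_notMem (Finset.disjoint_right.1 hdisj hb)]
    have := hQ b hb
    dsimp only
    omega

lemma slideFrom_union_left {d P Q : Finset Box} {g : Box → ℕ} {a : ℕ}
    (hP : ∀ b ∈ P, g b ≤ a) (hdisj : Disjoint (d ∪ Q) P) (n : ℕ) :
    slideFrom (d, P ∪ Q, g) a n =
      ((slideFrom (d, Q, g) a n).1, P ∪ (slideFrom (d, Q, g) a n).2.1,
        (slideFrom (d, Q, g) a n).2.2) := by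
  induction n with
  | zero => rfl
  | succ n ih =>
    rw [slideFrom_succ, slideFrom_succ, ih, switchStep_union_left]
    intro b hb
    rw [slideFrom_apply_of_notMem (Finset.disjoint_right.1 hdisj hb)]
    have := hP b hb
    dsimp only
    omega

end SlideFrom

def EqOnDom (s t : SlideState) : Prop :=
  s.1 = t.1 ∧ s.2.1 = t.2.1 ∧ ∀ b ∈ s.2.1, s.2.2 b = t.2.2 b

lemma EqOnDom.switchStep {s t : SlideState} (h : EqOnDom s t) (i : ℕ) :
    EqOnDom (switchStep s i) (switchStep t i) := by
  obtain ⟨h1, h2, h3⟩ := h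
  have hlev : ∀ p : Box → Prop, s.2.1.filter (fun b => s.2.2 b = i ∧ p b)
      = t.2.1.filter (fun b => t.2.2 b = i ∧ p b) := fun p => by
    rw [← h2]
    exact Finset.filter_congr fun b hb => by rw [h3 b hb]
  have hS : switchRegion s i = switchRegion t i := by
    simpa only [switchRegion, level, h1, and_true] using congrArg (t.1 ∪ ·) (hlev fun _ => True)
  refine ⟨?_, ?_, ?_⟩
  · simp only [switchStep_eq, hS, h1, hlev]
  · simp only [switchStep_eq, hS, h1, h2]
    congr 1
    exact Finset.filter_congr fun b hb => by rw [h3 b (h2 ▸ hb)]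
  · intro b hb
    simp only [switchStep_eq] at hb ⊢
    rw [h1, hS]
    split_ifs with hc
    · rfl
    · simp only [Finset.mem_union, Finset.mem_filter] at hb
      rcases hb with ⟨hbD, _⟩ | ⟨hbd, hsw⟩
      · exact h3 b hbD
      · exact absurd ⟨h1 ▸ hbd, hS ▸ hsw⟩ hc

lemma EqOnDom.slideFrom {s t : SlideState} (h : EqOnDom s t) (j n : ℕ) :
    EqOnDom (slideFrom s j n) (slideFrom t j n) := by
  induction n with
  | zero => exact h
  | succ n ih => rw [slideFrom_succ, slideFrom_succ]; exact ih.switchStep _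

noncomputable def slide (xs : Finset Box) (T : Finset Box × (Box → ℕ)) : SlideState :=
  KState xs T.1 T.2 (maxEntry T.1 T.2)

section Slide

variable {xs : Finset Box} {T : Finset Box × (Box → ℕ)}

lemma SlideInv.slide (h : SlideInv (xs, T)) : SlideInv (slide xs T) := by
  rw [KJdt.slide, KState_eq_slideFrom]
  exact h.slideFrom 0 _

lemma slide_subset (xs : Finset Box) (T : Finset Box × (Box → ℕ)) :
    (slide xs T).1 ∪ (slide xs T).2.1 ⊆ xs ∪ T.1 := by
  rw [slide, KState_eq_slideFrom]
  exact slideFrom_subset (xs, T) 0 _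

lemma slide_dots_nonempty (h : SlideInv (xs, T)) (hxs : xs.Nonempty) :
    (slide xs T).1.Nonempty := by
  rw [slide, KState_eq_slideFrom]
  exact slideFrom_dots_nonempty h hxs 0 _

end Slide

lemma slide_eq_slideFrom {xs : Finset Box} {T : Finset Box × (Box → ℕ)} {N : ℕ}
    (h : SlideInv (xs, T)) (hN : ∀ b ∈ T.1, T.2 b ≤ N) : slide xs T = slideFrom (xs, T) 0 N := by
  have hM : maxEntry T.1 T.2 ≤ N := Finset.sup_le hN
  have hle := slideFrom_le (st := (xs, T)) (j := 0) (n := maxEntry T.1 T.2)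
    (c := maxEntry T.1 T.2) (fun b hb => Finset.le_sup hb) (Nat.zero_add _).le
  rw [slide, KState_eq_slideFrom, ← Nat.add_sub_cancel' hM, slideFrom_add, Nat.zero_add,
    slideFrom_of_forall_notMem_Ioc (h.slideFrom 0 _)]
  intro b hb hc
  have := hle b hb
  rw [Finset.mem_Ioc] at hc
  omega

structure IsSplit (a : ℕ) (T A B : Finset Box × (Box → ℕ)) : Prop where
  union : T.1 = A.1 ∪ B.1
  eqOn_left : ∀ b ∈ A.1, T.2 b = A.2 b
  eqOn_right : ∀ b ∈ B.1, T.2 b = B.2 b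
  le_left : ∀ b ∈ A.1, A.2 b ≤ a
  lt_right : ∀ b ∈ B.1, a < B.2 b

lemma slide_eq_slideFrom_of_lt {d D : Finset Box} {f : Box → ℕ} {a n : ℕ}
    (h : SlideInv (d, D, f)) (hf : ∀ b ∈ D, a < f b ∧ f b ≤ a + n) :
    slide d (D, f) = slideFrom (d, D, f) a n := by
  rw [slide_eq_slideFrom h fun b hb => (hf b hb).2, slideFrom_add, Nat.zero_add,
    slideFrom_of_forall_notMem_Ioc h fun b hb hc => ?_]
  have := (hf b hb).1
  rw [Finset.mem_Ioc] at hc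
  dsimp only at hc
  omega

lemma slide_union_eq {xs DA DB : Finset Box} {g : Box → ℕ} {a n : ℕ} {s : SlideState}
    (hinv : SlideInv (xs, DA ∪ DB, g)) (hA : ∀ b ∈ DA, g b ≤ a)
    (hB : ∀ b ∈ DB, a < g b ∧ g b ≤ a + n) (hxAB : Disjoint (xs ∪ DA) DB)
    (hs : slideFrom (xs, DA, g) 0 a = s) :
    slide xs (DA ∪ DB, g) = ((slideFrom (s.1, DB, s.2.2) a n).1,
      s.2.1 ∪ (slideFrom (s.1, DB, s.2.2) a n).2.1, (slideFrom (s.1, DB, s.2.2) a n).2.2) := by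
  have hinvs : SlideInv s :=
    hs ▸ (hinv.mono Finset.subset_union_left fun _ _ => rfl).slideFrom 0 a
  have hsB : Disjoint s.2.1 DB := Finset.disjoint_of_subset_left
    (Finset.subset_union_right.trans (hs ▸ slideFrom_subset _ 0 a)) hxAB
  have hs_le : ∀ b ∈ s.2.1, s.2.2 b ≤ a := hs ▸ slideFrom_le hA (Nat.zero_add a).le
  have hTN : ∀ b ∈ DA ∪ DB, g b ≤ a + n := fun b hb =>
    (Finset.mem_union.1 hb).elim (fun hb => (hA b hb).trans (Nat.le_add_right a n))
      fun hb => (hB b hb).2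
  rw [slide_eq_slideFrom hinv hTN, slideFrom_add, Nat.zero_add,
    slideFrom_union_right (fun b hb => (hB b hb).1) hxAB le_rfl, hs,
    slideFrom_union_left hs_le (Finset.disjoint_union_left.2 ⟨hinvs.disjoint, hsB.symm⟩) n]

theorem IsSplit.slide {a : ℕ} {xs : Finset Box} {T A B : Finset Box × (Box → ℕ)}
    (h : IsSplit a T A B) (hinv : SlideInv (xs, T)) :
    IsSplit a (slide xs T).2 (slide xs A).2 (slide (slide xs A).1 B).2 := by
  obtain ⟨D, g⟩ := T
  obtain ⟨DA, fA⟩ := A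
  obtain ⟨DB, fB⟩ := B
  obtain ⟨hD, hgA, hgB, hA, hB⟩ := h
  dsimp only at hD hgA hgB hA hB
  subst hD
  have hAg : ∀ b ∈ DA, g b ≤ a := fun b hb => hgA b hb ▸ hA b hb
  set n := maxEntry DB fB - a
  have hBn : ∀ b ∈ DB, a < fB b ∧ fB b ≤ a + n := fun b hb => by
    have := Finset.le_sup (f := fB) hb
    exact ⟨hB b hb, by unfold n maxEntry; omega⟩
  obtain ⟨s, hs⟩ : ∃ s, slideFrom (xs, DA, g) 0 a = s := ⟨_, rfl⟩
  set t := slideFrom (s.1, DB, s.2.2) a n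
  have hxAB : Disjoint (xs ∪ DA) DB := Finset.disjoint_union_left.2
    ⟨hinv.disjoint.mono_right Finset.subset_union_right,
      Finset.disjoint_left.2 fun b hbA hbB => absurd (hAg b hbA) (hgB b hbB ▸ hB b hbB).not_ge⟩
  have hsT : KJdt.slide xs (DA ∪ DB, g) = (t.1, s.2.1 ∪ t.2.1, t.2.2) :=
    slide_union_eq hinv hAg (fun b hb => hgB b hb ▸ hBn b hb) hxAB hs
  have hinvs : SlideInv s :=
    hs ▸ (hinv.mono Finset.subset_union_left fun _ _ => rfl).slideFrom 0 a
  have hsDB : Disjoint (s.1 ∪ s.2.1) DB :=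
    Finset.disjoint_of_subset_left (hs ▸ slideFrom_subset _ 0 a) hxAB
  have hBs : ∀ b ∈ DB, s.2.2 b = fB b := fun b hb => by
    rw [← hs, slideFrom_apply_of_notMem (Finset.disjoint_right.1 hxAB hb) 0 a]
    exact hgB b hb
  have hsA : EqOnDom (KJdt.slide xs (DA, fA)) s := by
    rw [slide_eq_slideFrom (hinv.mono Finset.subset_union_left fun b hb => (hgA b hb).symm) hA,
      ← hs]
    exact EqOnDom.slideFrom (s := (xs, DA, fA)) (t := (xs, DA, g))
      ⟨rfl, rfl, fun b hb => (hgA b hb).symm⟩ 0 a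
  have hsB : EqOnDom (KJdt.slide s.1 (DB, fB)) t := by
    have hinvB : SlideInv (s.1, DB, fB) :=
      ⟨hsDB.mono_left Finset.subset_union_left, hinvs.dots,
        (hinv.mono Finset.subset_union_right fun b hb => (hgB b hb).symm).noAdjacent_level⟩
    rw [slide_eq_slideFrom_of_lt hinvB hBn]
    exact EqOnDom.slideFrom (s := (s.1, DB, fB)) (t := (s.1, DB, s.2.2))
      ⟨rfl, rfl, fun b hb => (hBs b hb).symm⟩ a n
  rw [hsA.1]
  refine ⟨?_, fun b hb => ?_, fun b hb => ?_, fun b hb => ?_, fun b hb => ?_⟩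
  · rw [hsT, hsA.2.1, hsB.2.1]
  · rw [hsA.2.1] at hb
    rw [hsT, hsA.2.2 b (hsA.2.1 ▸ hb)]
    refine slideFrom_apply_of_notMem (st := (s.1, DB, s.2.2)) ?_ a n
    exact Finset.disjoint_left.1 (Finset.disjoint_union_right.2
      ⟨hinvs.disjoint.symm, hsDB.mono_left Finset.subset_union_right⟩) hb
  · rw [hsT, hsB.2.2 b hb]
  · rw [hsA.2.2 b hb, ← hs]
    exact slideFrom_le hAg (Nat.zero_add a).le b (hs ▸ hsA.2.1 ▸ hb)
  · rw [hsB.2.2 b hb]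
    exact lt_slideFrom (st := (s.1, DB, s.2.2)) (fun b hb => (hBs b hb).symm ▸ hB b hb) le_rfl
      b (hsB.2.1 ▸ hb)

lemma isSplit_filter (T : Finset Box × (Box → ℕ)) (a : ℕ) :
    IsSplit a T (T.1.filter (fun b => T.2 b ≤ a), T.2) (T.1.filter (fun b => a < T.2 b), T.2) :=
  ⟨by rw [← Finset.filter_or, Finset.filter_true_of_mem fun b _ => le_or_gt _ _],
    fun _ _ => rfl, fun _ _ => rfl, fun _ hb => (Finset.mem_filter.1 hb).2,
    fun _ hb => (Finset.mem_filter.1 hb).2⟩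

end KJdt

namespace KInfusion

open KJdt

/-- After `k` steps of K-infusion of `U` past `R`, `outer R U k` is the partially slid `U` and
`record R U k` the partial K-infusion₂. Step `k + 1` starts with •'s on the boxes of `R` labelled
`maxEntry R - k`; `holes R U k` are the final positions of these •'s, which `record` labels
`maxEntry R - k`. -/
noncomputable def iter (R U : Finset Box × (Box → ℕ)) (k : ℕ) :
    (Finset Box × (Box → ℕ)) × (Finset Box × (Box → ℕ)) × (Finset Box × (Box → ℕ)) :=
  infusionStep^[k] (R, U, (∅, fun _ => 0))

noncomputable def outer (R U : Finset Box × (Box → ℕ)) (k : ℕ) : Finset Box × (Box → ℕ) :=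
  (iter R U k).2.1

noncomputable def record (R U : Finset Box × (Box → ℕ)) (k : ℕ) : Finset Box × (Box → ℕ) :=
  (iter R U k).2.2

noncomputable def holes (R U : Finset Box × (Box → ℕ)) (k : ℕ) : Finset Box :=
  (slide (level R (maxEntry R.1 R.2 - k)) (outer R U k)).1

lemma KInfusion_eq (R U : Finset Box × (Box → ℕ)) :
    KInfusion R.1 R.2 U.1 U.2 = (outer R U (maxEntry R.1 R.2), record R U (maxEntry R.1 R.2)) :=
  rfl

def HasAllLabels (T : Finset Box × (Box → ℕ)) : Prop :=
  ∀ v, 1 ≤ v → v ≤ maxEntry T.1 T.2 → ∃ b ∈ T.1, T.2 b = v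

lemma maxEntry_filter_le {T : Finset Box × (Box → ℕ)} (hT : HasAllLabels T) {m : ℕ}
    (hm : 1 ≤ m) (hmT : m ≤ maxEntry T.1 T.2) :
    maxEntry (T.1.filter (fun b => T.2 b ≤ m)) T.2 = m := by
  refine le_antisymm (Finset.sup_le fun b hb => (Finset.mem_filter.1 hb).2) ?_
  obtain ⟨b, hb, hbm⟩ := hT m hm hmT
  calc m = T.2 b := hbm.symm
    _ ≤ _ := Finset.le_sup (Finset.mem_filter.2 ⟨hb, hbm.le⟩)

variable {R U : Finset Box × (Box → ℕ)} {k : ℕ}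

lemma iter_fst (hR : HasAllLabels R) (hk : k ≤ maxEntry R.1 R.2) :
    (iter R U k).1 = (R.1.filter (fun b => R.2 b ≤ maxEntry R.1 R.2 - k), R.2) := by
  induction k with
  | zero =>
    refine Prod.ext (Finset.filter_true_of_mem fun b hb => ?_).symm rfl
    exact Finset.le_sup (f := R.2) hb
  | succ k ih =>
    rw [iter, Function.iterate_succ_apply', ← iter]
    show ((iter R U k).1.1 \ level (iter R U k).1 _, (iter R U k).1.2) = _
    rw [ih (by omega), maxEntry_filter_le hR (m := maxEntry R.1 R.2 - k) (by omega) (by omega)]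
    refine Prod.ext ?_ rfl
    ext b
    simp only [level, Finset.mem_sdiff, Finset.mem_filter]
    by_cases hb : b ∈ R.1
    · simp only [hb, true_and]; omega
    · simp only [hb, false_and]

lemma level_iter_fst (hR : HasAllLabels R) (hk : k < maxEntry R.1 R.2) :
    level (iter R U k).1 (maxEntry (iter R U k).1.1 (iter R U k).1.2)
      = level R (maxEntry R.1 R.2 - k) := by
  rw [iter_fst hR hk.le, maxEntry_filter_le hR (m := maxEntry R.1 R.2 - k) (by omega) (by omega)]
  ext b
  simp only [level, Finset.mem_filter]
  by_cases hb : b ∈ R.1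
  · simp only [hb, true_and]; omega
  · simp only [hb, false_and]

lemma outer_succ (hR : HasAllLabels R) (hk : k < maxEntry R.1 R.2) :
    outer R U (k + 1) = (slide (level R (maxEntry R.1 R.2 - k)) (outer R U k)).2 := by
  rw [outer, iter, Function.iterate_succ_apply', ← iter]
  show (slide (level (iter R U k).1 _) _).2 = _
  rw [level_iter_fst hR hk]
  rfl

lemma record_succ (hR : HasAllLabels R) (hk : k < maxEntry R.1 R.2) :
    record R U (k + 1) = ((record R U k).1 ∪ holes R U k,
      fun b => if b ∈ holes R U k then maxEntry R.1 R.2 - k else (record R U k).2 b) := by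
  rw [record, iter, Function.iterate_succ_apply', ← iter]
  show (_ ∪ (slide (level (iter R U k).1 _) _).1, fun b =>
    if b ∈ (slide (level (iter R U k).1 _) _).1 then _ else _) = _
  rw [level_iter_fst hR hk, iter_fst (U := U) hR hk.le,
    maxEntry_filter_le hR (m := maxEntry R.1 R.2 - k) (by omega) (by omega)]
  rfl

structure Admissible (R U : Finset Box × (Box → ℕ)) : Prop where
  hasAllLabels : HasAllLabels R
  noAdjacent_inner : ∀ i, NoAdjacent (level R i)
  noAdjacent_outer : ∀ i, NoAdjacent (level U i)
  disjoint : Disjoint U.1 R.1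

structure Invariant (R U : Finset Box × (Box → ℕ)) (k : ℕ) : Prop where
  noAdjacent_level : ∀ i, NoAdjacent (level (outer R U k) i)
  outer_subset : (outer R U k).1 ⊆ U.1 ∪ R.1.filter (fun b => maxEntry R.1 R.2 - k < R.2 b)
  record_fst : (record R U k).1 = (Finset.range k).biUnion (holes R U)
  record_snd : ∀ j < k, ∀ b ∈ holes R U j, (record R U k).2 b = maxEntry R.1 R.2 - j
  disjoint_record : Disjoint (record R U k).1
    ((outer R U k).1 ∪ R.1.filter (fun b => R.2 b ≤ maxEntry R.1 R.2 - k))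

lemma Invariant.slideInv (hRU : Admissible R U) (h : Invariant R U k) :
    SlideInv (level R (maxEntry R.1 R.2 - k), outer R U k) := by
  refine ⟨Finset.disjoint_right.2 fun b hb hbl => ?_, hRU.noAdjacent_inner _,
    h.noAdjacent_level⟩
  obtain ⟨hbR, hbk⟩ := Finset.mem_filter.1 hbl
  rcases Finset.mem_union.1 (h.outer_subset hb) with hbU | hbR'
  · exact Finset.disjoint_left.1 hRU.disjoint hbU hbR
  · exact (Finset.mem_filter.1 hbR').2.ne' hbk

lemma holes_union_outer_succ_subset :
    holes R U k ∪ (slide (level R (maxEntry R.1 R.2 - k)) (outer R U k)).2.1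
      ⊆ (outer R U k).1 ∪ R.1.filter (fun b => R.2 b ≤ maxEntry R.1 R.2 - k) := by
  refine (slide_subset _ _).trans ?_
  rw [Finset.union_comm]
  exact Finset.union_subset_union_right (Finset.monotone_filter_right _ fun _ _ h => h.le)

lemma holes_nonempty (hRU : Admissible R U) (h : Invariant R U k)
    (hk : k < maxEntry R.1 R.2) : (holes R U k).Nonempty := by
  obtain ⟨b, hb, hbv⟩ := hRU.hasAllLabels (maxEntry R.1 R.2 - k) (by omega) (by omega)
  exact slide_dots_nonempty (h.slideInv hRU) ⟨b, Finset.mem_filter.2 ⟨hb, hbv⟩⟩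

lemma Invariant.succ (hRU : Admissible R U) (h : Invariant R U k) (hk : k < maxEntry R.1 R.2) :
    Invariant R U (k + 1) := by
  have hR := hRU.hasAllLabels
  have hsub := holes_union_outer_succ_subset (R := R) (U := U) (k := k)
  have hinv := (h.slideInv hRU).slide
  have hholes : Disjoint (record R U k).1 (holes R U k) :=
    h.disjoint_record.mono_right (Finset.subset_union_left.trans hsub)
  refine ⟨?_, ?_, ?_, ?_, ?_⟩
  · rw [outer_succ hR hk]
    exact hinv.noAdjacent_level
  · intro b hb
    rw [outer_succ hR hk] at hb
    rcases Finset.mem_union.1 (slide_subset _ _ (Finset.mem_union_right _ hb)) with hbl | hbo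
    · obtain ⟨hbR, hbv⟩ := Finset.mem_filter.1 hbl
      exact Finset.mem_union_right _ (Finset.mem_filter.2 ⟨hbR, by omega⟩)
    · exact Finset.union_subset_union_right
        (Finset.monotone_filter_right _ fun _ _ h => by omega) (h.outer_subset hbo)
  · rw [record_succ hR hk, h.record_fst, Finset.range_add_one, Finset.biUnion_insert,
      Finset.union_comm]
  · intro j hj b hb
    rw [record_succ hR hk]
    rcases Nat.lt_succ_iff_lt_or_eq.1 hj with hj | rfl
    · have hbk : b ∉ holes R U k := Finset.disjoint_left.1 hholes
        (h.record_fst ▸ Finset.mem_biUnion.2 ⟨j, Finset.mem_range.2 hj, hb⟩)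
      simp only [if_neg hbk]
      exact h.record_snd j hj b hb
    · simp only [if_pos hb]
  · have hle : R.1.filter (fun b => R.2 b ≤ maxEntry R.1 R.2 - (k + 1))
        ⊆ R.1.filter (fun b => R.2 b ≤ maxEntry R.1 R.2 - k) :=
      Finset.monotone_filter_right _ fun _ _ h => by omega
    rw [record_succ hR hk, outer_succ hR hk, Finset.disjoint_union_left]
    refine ⟨h.disjoint_record.mono_right (Finset.union_subset
      (Finset.subset_union_right.trans hsub) (hle.trans Finset.subset_union_right)),
      Finset.disjoint_union_right.2 ⟨hinv.disjoint, Finset.disjoint_left.2 fun b hb hbR => ?_⟩⟩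
    obtain ⟨hbR, hbv⟩ := Finset.mem_filter.1 hbR
    rcases Finset.mem_union.1 (slide_subset _ _ (Finset.mem_union_left _ hb)) with hbl | hbo
    · have := (Finset.mem_filter.1 hbl).2
      omega
    · rcases Finset.mem_union.1 (h.outer_subset hbo) with hbU | hbR'
      · exact Finset.disjoint_left.1 hRU.disjoint hbU hbR
      · have := (Finset.mem_filter.1 hbR').2
        omega

lemma invariant (hRU : Admissible R U) : ∀ k ≤ maxEntry R.1 R.2, Invariant R U k
  | 0, _ => ⟨hRU.noAdjacent_outer, Finset.subset_union_left, by simp [record, iter],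
      fun j hj => absurd hj (Nat.not_lt_zero j), Finset.disjoint_empty_left _⟩
  | k + 1, hk => (invariant hRU k (by omega)).succ hRU hk

lemma level_record (hRU : Admissible R U) {j : ℕ} (hj : j < maxEntry R.1 R.2) :
    level (record R U (maxEntry R.1 R.2)) (maxEntry R.1 R.2 - j) = holes R U j := by
  have h := invariant hRU _ le_rfl
  ext b
  simp only [level, Finset.mem_filter, h.record_fst, Finset.mem_biUnion, Finset.mem_range]
  constructor
  · rintro ⟨⟨j', hj', hb⟩, hv⟩
    have := h.record_snd j' hj' b hb
    obtain rfl : j' = j := by omega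
    exact hb
  · exact fun hb => ⟨⟨j, hj, hb⟩, h.record_snd j hj b hb⟩

lemma record_snd_le (hRU : Admissible R U) {b : Box}
    (hb : b ∈ (record R U (maxEntry R.1 R.2)).1) :
    (record R U (maxEntry R.1 R.2)).2 b ≤ maxEntry R.1 R.2 := by
  have h := invariant hRU _ le_rfl
  rw [h.record_fst] at hb
  obtain ⟨j, hj, hb⟩ := Finset.mem_biUnion.1 hb
  rw [h.record_snd j (Finset.mem_range.1 hj) b hb]
  exact Nat.sub_le _ _

lemma exists_mem_level_record (hRU : Admissible R U) {v : ℕ} (hv : 1 ≤ v)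
    (hvM : v ≤ maxEntry R.1 R.2) :
    (level (record R U (maxEntry R.1 R.2)) v).Nonempty := by
  have hj : maxEntry R.1 R.2 - v < maxEntry R.1 R.2 := by omega
  have := level_record hRU hj
  rw [Nat.sub_sub_self hvM] at this
  rw [this]
  exact holes_nonempty hRU (invariant hRU _ hj.le) hj

lemma maxEntry_record (hRU : Admissible R U) :
    maxEntry (record R U (maxEntry R.1 R.2)).1 (record R U (maxEntry R.1 R.2)).2
      = maxEntry R.1 R.2 := by
  refine le_antisymm (Finset.sup_le fun _ hb => record_snd_le hRU hb) ?_
  rcases Nat.eq_zero_or_pos (maxEntry R.1 R.2) with h0 | hpos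
  · omega
  · obtain ⟨b, hb⟩ := exists_mem_level_record hRU hpos le_rfl
    obtain ⟨hb, hbv⟩ := Finset.mem_filter.1 hb
    calc maxEntry R.1 R.2 = _ := hbv.symm
      _ ≤ _ := Finset.le_sup hb

lemma hasAllLabels_record (hRU : Admissible R U) :
    HasAllLabels (record R U (maxEntry R.1 R.2)) := by
  intro v hv hvM
  rw [maxEntry_record hRU] at hvM
  obtain ⟨b, hb⟩ := exists_mem_level_record hRU hv hvM
  exact ⟨b, Finset.mem_filter.1 hb⟩

lemma Admissible.mono {V : Finset Box × (Box → ℕ)} (h : Admissible R U) (hVU : V.1 ⊆ U.1)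
    (hV : ∀ b ∈ V.1, V.2 b = U.2 b) : Admissible R V := by
  refine ⟨h.hasAllLabels, h.noAdjacent_inner, fun i => ?_, h.disjoint.mono_left hVU⟩
  have hlev : level V i = V.1.filter (fun b => U.2 b = i) :=
    Finset.filter_congr fun b hb => by rw [hV b hb]
  rw [hlev]
  exact (h.noAdjacent_outer i).mono (Finset.filter_subset_filter _ hVU)

theorem isSplit_outer {T A B : Finset Box × (Box → ℕ)} {a : ℕ}
    (hRT : Admissible R T) (hRA : Admissible R A) (h : IsSplit a T A B) :
    ∀ k ≤ maxEntry R.1 R.2,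
      IsSplit a (outer R T k) (outer R A k) (outer (record R A (maxEntry R.1 R.2)) B k) := by
  intro k
  induction k with
  | zero => exact fun _ => h
  | succ k ih =>
    intro hk
    have hmax := maxEntry_record hRA
    rw [outer_succ hRT.hasAllLabels hk, outer_succ hRA.hasAllLabels hk,
      outer_succ (hasAllLabels_record hRA) (by rw [hmax]; exact hk), hmax, level_record hRA hk]
    exact (ih (by omega)).slide ((invariant hRT k (by omega)).slideInv hRT)

theorem isSplit {T A B : Finset Box × (Box → ℕ)} {a : ℕ}
    (hRT : Admissible R T) (hRA : Admissible R A) (h : IsSplit a T A B) :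
    IsSplit a (KInfusion R.1 R.2 T.1 T.2).1 (KInfusion R.1 R.2 A.1 A.2).1
      (KInfusion (KInfusion R.1 R.2 A.1 A.2).2.1 (KInfusion R.1 R.2 A.1 A.2).2.2 B.1 B.2).1 := by
  simp only [KInfusion_eq, maxEntry_record hRA]
  exact isSplit_outer hRT hRA h _ le_rfl

end KInfusion

theorem stmt13_general (lam nu : Finset Box) (Rf f : Box → ℕ) (a : ℕ)
    (hR : IsIncTab lam Rf) (hT : IsIncTab (nu \ lam) f) :
    (KInfusion lam Rf (nu \ lam) f).1.1
      = (KInfusion lam Rf ((nu \ lam).filter (fun b => f b ≤ a)) f).1.1 ∪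
        (KInfusion (KInfusion lam Rf ((nu \ lam).filter (fun b => f b ≤ a)) f).2.1
                   (KInfusion lam Rf ((nu \ lam).filter (fun b => f b ≤ a)) f).2.2
                   ((nu \ lam).filter (fun b => a < f b)) f).1.1 ∧
    (∀ b ∈ (KInfusion lam Rf ((nu \ lam).filter (fun b => f b ≤ a)) f).1.1,
      (KInfusion lam Rf (nu \ lam) f).1.2 b
        = (KInfusion lam Rf ((nu \ lam).filter (fun b => f b ≤ a)) f).1.2 b) ∧
    (∀ b ∈ (KInfusion (KInfusion lam Rf ((nu \ lam).filter (fun b => f b ≤ a)) f).2.1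
                      (KInfusion lam Rf ((nu \ lam).filter (fun b => f b ≤ a)) f).2.2
                      ((nu \ lam).filter (fun b => a < f b)) f).1.1,
      (KInfusion lam Rf (nu \ lam) f).1.2 b
        = (KInfusion (KInfusion lam Rf ((nu \ lam).filter (fun b => f b ≤ a)) f).2.1
                     (KInfusion lam Rf ((nu \ lam).filter (fun b => f b ≤ a)) f).2.2
                     ((nu \ lam).filter (fun b => a < f b)) f).1.2 b) := by
  have hRT : KInfusion.Admissible (lam, Rf) (nu \ lam, f) :=
    ⟨hR.2.2, hR.1.noAdjacent_level, hT.1.noAdjacent_level, Finset.sdiff_disjoint⟩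
  have hRA : KInfusion.Admissible (lam, Rf) ((nu \ lam).filter (fun b => f b ≤ a), f) :=
    hRT.mono (Finset.filter_subset _ _) fun _ _ => rfl
  have hsplit := KInfusion.isSplit hRT hRA (KJdt.isSplit_filter (nu \ lam, f) a)
  exact ⟨hsplit.union, hsplit.eqOn_left, hsplit.eqOn_right⟩

/-- splitting K-infusion at the value `a`:
`K-infusion₁(R,T) = K-infusion₁(R,A) ∪ K-infusion₁(K-infusion₂(R,A), B)` where
`A` consists of the entries of `T` that are `≤ a` and `B` is the rest. -/
theorem stmt13 (lam nu : Finset Box) (Rf f : Box → ℕ) (a : ℕ)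
    (hlam : IsYoung lam) (hnu : IsYoung nu) (hsub : lam ⊆ nu)
    (hR : IsIncTab lam Rf) (hT : IsIncTab (nu \ lam) f) :
    (KInfusion lam Rf (nu \ lam) f).1.1
      = (KInfusion lam Rf ((nu \ lam).filter (fun b => f b ≤ a)) f).1.1 ∪
        (KInfusion (KInfusion lam Rf ((nu \ lam).filter (fun b => f b ≤ a)) f).2.1
                   (KInfusion lam Rf ((nu \ lam).filter (fun b => f b ≤ a)) f).2.2
                   ((nu \ lam).filter (fun b => a < f b)) f).1.1 ∧
    (∀ b ∈ (KInfusion lam Rf ((nu \ lam).filter (fun b => f b ≤ a)) f).1.1,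
      (KInfusion lam Rf (nu \ lam) f).1.2 b
        = (KInfusion lam Rf ((nu \ lam).filter (fun b => f b ≤ a)) f).1.2 b) ∧
    (∀ b ∈ (KInfusion (KInfusion lam Rf ((nu \ lam).filter (fun b => f b ≤ a)) f).2.1
                      (KInfusion lam Rf ((nu \ lam).filter (fun b => f b ≤ a)) f).2.2
                      ((nu \ lam).filter (fun b => a < f b)) f).1.1,
      (KInfusion lam Rf (nu \ lam) f).1.2 b
        = (KInfusion (KInfusion lam Rf ((nu \ lam).filter (fun b => f b ≤ a)) f).2.1
                     (KInfusion lam Rf ((nu \ lam).filter (fun b => f b ≤ a)) f).2.2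
                     ((nu \ lam).filter (fun b => a < f b)) f).1.2 b) :=
  stmt13_general lam nu Rf f a hR hT
end

section
/- For a standard Young tableau T of skew shape and an ordinary jeu de taquin slide into a single inner corner, the length of the longest strictly increasing subsequence of the reading word is preserved: LIS(jdt_x(T)) = LIS(T). -/
open Finset
open scoped Classical

/-- One step of the ordinary jeu de taquin slide: the hole `p.2.2` swaps with the
smaller of the entries directly right of and below it (if any). -/
noncomputable def holeMove (p : Finset Box × (Box → ℕ) × Box) :
    Finset Box × (Box → ℕ) × Box :=
  let dom := p.1
  let f := p.2.1
  let h := p.2.2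
  let rightB : Box := (h.1, h.2 + 1)
  let downB : Box := (h.1 + 1, h.2)
  if rightB ∈ dom then
    if downB ∈ dom then
      if f rightB < f downB then
        (insert h (dom.erase rightB), Function.update f h (f rightB), rightB)
      else (insert h (dom.erase downB), Function.update f h (f downB), downB)
    else (insert h (dom.erase rightB), Function.update f h (f rightB), rightB)
  else if downB ∈ dom then
    (insert h (dom.erase downB), Function.update f h (f downB), downB)
  else p

/-- The ordinary (Schützenberger) jeu de taquin slide into the inner corner `x`. -/
noncomputable def jdt (x : Box) (dom : Finset Box) (f : Box → ℕ) :
    Finset Box × (Box → ℕ) :=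
  ((holeMove^[dom.card] (dom, f, x)).1, (holeMove^[dom.card] (dom, f, x)).2.1)

/-!
During the slide the tableau is a filling `g` of `S \ {h}`, where the hole `h` moves through the
fixed shape `S = (ν/λ) ∪ {x} = (ν ∪ λ) \ (λ \ {x})`, a difference of two lower sets and
hence order-convex in `ℕ × ℕ`. The invariant is that `g` is strictly monotone for the product
order: this also compares entries on opposite sides of the hole, and it is preserved because the
entry moved into the hole is the smallest one southeast of it.

A move to the right does not change the reading word. A move down takes the entry `v` below the
hole at `(r, c)` into row `r`, past the rest of row `r + 1` and the start of row `r`. An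
increasing subsequence through `v` may use entries of row `r + 1` right of `v`; lifting all of
them to row `r` gives an increasing subsequence of the new reading word of the same length.
Conversely, one through `v` in its new position may use entries of row `r` left of `v`, and
these are dropped to row `r + 1`.
-/

lemma IsYoung.isLowerSet {μ : Finset Box} (hμ : IsYoung μ) : IsLowerSet (μ : Set Box) := by
  have row : ∀ k r c, (r + k, c) ∈ μ → (r, c) ∈ μ := by
    intro k; induction k with
    | zero => simp
    | succ k ih => exact fun r c h => ih r c (hμ.1 _ _ h)
  have col : ∀ k r c, (r, c + k) ∈ μ → (r, c) ∈ μ := by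
    intro k; induction k with
    | zero => simp
    | succ k ih => exact fun r c h => ih r c (hμ.2 _ _ h)
  rintro ⟨r, c⟩ ⟨r', c'⟩ ⟨hr, hc⟩ h
  obtain ⟨k, rfl⟩ := Nat.exists_eq_add_of_le hr
  obtain ⟨l, rfl⟩ := Nat.exists_eq_add_of_le hc
  exact row k r' c' (col l (r' + k) c' h)

lemma IsYoung.isLowerSet_erase {lam : Finset Box} {x : Box} (hlam : IsYoung lam)
    (hx : InnerCorner lam x) : IsLowerSet (lam.erase x : Set Box) := by
  intro a b hba ha
  simp only [Finset.coe_erase, Set.mem_sdiff, Set.mem_singleton_iff, Finset.mem_coe] at ha ⊢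
  refine ⟨hlam.isLowerSet hba ha.1, fun hbx => ?_⟩
  subst hbx
  rcases Prod.lt_iff.1 (lt_of_le_of_ne hba (Ne.symm ha.2)) with ⟨h1, h2⟩ | ⟨h1, h2⟩
  · exact hx.2.1 (hlam.isLowerSet (show (b.1 + 1, b.2) ≤ a from ⟨h1, h2⟩) ha.1)
  · exact hx.2.2 (hlam.isLowerSet (show (b.1, b.2 + 1) ≤ a from ⟨h1, h2⟩) ha.1)

lemma insert_innerCorner_sdiff {lam nu : Finset Box} {x : Box} (hx : InnerCorner lam x) :
    insert x (nu \ lam) = (nu ∪ lam) \ lam.erase x := by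
  ext b
  by_cases hb : b = x
  · subst hb; simp [hx.1]
  · simp only [Finset.mem_insert, hb, false_or, Finset.mem_sdiff, Finset.mem_union,
      Finset.mem_erase, ne_eq, not_false_eq_true, true_and]
    tauto

lemma IsLowerSet.ordConnected_sdiff {α : Type*} [Preorder α] {A B : Set α} (hA : IsLowerSet A)
    (hB : IsLowerSet B) : (A \ B).OrdConnected := by
  rw [Set.sdiff_eq]
  exact hA.ordConnected.inter hB.compl.ordConnected

lemma ordConnected_insert_innerCorner {lam nu : Finset Box} {x : Box} (hlam : IsYoung lam)
    (hnu : IsYoung nu) (hx : InnerCorner lam x) :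
    (↑(insert x (nu \ lam)) : Set Box).OrdConnected := by
  rw [insert_innerCorner_sdiff hx, Finset.coe_sdiff, Finset.coe_union]
  exact (hnu.isLowerSet.union hlam.isLowerSet).ordConnected_sdiff (hlam.isLowerSet_erase hx)

lemma exists_succ_le_of_lt {a b : Box} (hab : a < b) :
    ∃ s : Box, (s = (a.1 + 1, a.2) ∨ s = (a.1, a.2 + 1)) ∧ a ≤ s ∧ s ≤ b := by
  rcases Prod.lt_iff.1 hab with ⟨h1, h2⟩ | ⟨h1, h2⟩
  · exact ⟨_, .inl rfl, ⟨by simp, le_rfl⟩, ⟨h1, h2⟩⟩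
  · exact ⟨_, .inr rfl, ⟨le_rfl, by simp⟩, ⟨h1, h2⟩⟩

lemma fst_add_snd_lt_of_lt {a b : Box} (hab : a < b) : a.1 + a.2 < b.1 + b.2 := by
  rcases Prod.lt_iff.1 hab with ⟨h1, h2⟩ | ⟨h1, h2⟩ <;> omega

lemma lt_below {r j : ℕ} : ((r, j) : Box) < (r + 1, j) :=
  Prod.lt_iff.2 (Or.inl ⟨Nat.lt_succ_self r, le_rfl⟩)

lemma lt_right {r j : ℕ} : ((r, j) : Box) < (r, j + 1) :=
  Prod.lt_iff.2 (Or.inr ⟨le_rfl, Nat.lt_succ_self j⟩)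

lemma readBefore_below {r j : ℕ} : ReadBefore (r + 1, j) (r, j) := Or.inl (Nat.lt_succ_self r)

lemma IncreasingOn.lt_succ {S : Finset Box} {g : Box → ℕ} (hg : IncreasingOn S g) {a s : Box}
    (hs : s = (a.1 + 1, a.2) ∨ s = (a.1, a.2 + 1)) (ha : a ∈ S) (hsS : s ∈ S) :
    g a < g s := by
  rcases hs with rfl | rfl
  · exact hg.2 a.1 a.2 ha hsS
  · exact hg.1 a.1 a.2 ha hsS

lemma IncreasingOn.strictMonoOn {S : Finset Box} {g : Box → ℕ} (hg : IncreasingOn S g)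
    (hS : (S : Set Box).OrdConnected) : StrictMonoOn g S := by
  suffices key :
      ∀ n a b, b.1 + b.2 = a.1 + a.2 + n → a ∈ S → b ∈ S → a < b → g a < g b from
    fun a ha b hb hab =>
      key _ a b (Nat.add_sub_of_le (fst_add_snd_lt_of_lt hab).le).symm ha hb hab
  intro n
  induction n using Nat.strong_induction_on with
  | _ n ih =>
    intro a b hn ha hb hab
    obtain ⟨s, hs, has, hsb⟩ := exists_succ_le_of_lt hab
    have hsS : s ∈ S := hS.out ha hb ⟨has, hsb⟩
    have hgs := hg.lt_succ hs ha hsS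
    rcases eq_or_lt_of_le hsb with rfl | hsb
    · exact hgs
    · have hs1 : s.1 + s.2 = a.1 + a.2 + 1 := by rcases hs with rfl | rfl <;> simp <;> omega
      have := fst_add_snd_lt_of_lt hsb
      exact hgs.trans (ih (n - 1) (by omega) s b (by omega) hsS hb hsb)

def IsIncreasingSubword (D : Finset Box) (g : Box → ℕ) (I : Finset Box) : Prop :=
  I ⊆ D ∧ ∀ a ∈ I, ∀ b ∈ I, ReadBefore a b → g a < g b

lemma IsIncreasingSubword.card_le_LIS {D I : Finset Box} {g : Box → ℕ}
    (hI : IsIncreasingSubword D g I) : I.card ≤ LIS D g :=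
  Finset.le_sup (by simp only [Finset.mem_filter, Finset.mem_powerset]; exact hI)

lemma LIS_le {D : Finset Box} {g : Box → ℕ} {n : ℕ}
    (h : ∀ I, IsIncreasingSubword D g I → I.card ≤ n) : LIS D g ≤ n :=
  Finset.sup_le fun I hI => h I <| by
    simp only [Finset.mem_filter, Finset.mem_powerset] at hI; exact hI

lemma IsIncreasingSubword.of_eqOn {D D' I : Finset Box} {g g' : Box → ℕ}
    (hI : IsIncreasingSubword D g I) (hID' : I ⊆ D') (hg : ∀ a ∈ I, g' a = g a) :
    IsIncreasingSubword D' g' I :=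
  ⟨hID', fun a ha b hb hab => by rw [hg a ha, hg b hb]; exact hI.2 a ha b hb hab⟩

lemma IsIncreasingSubword.not_readBefore_of_lt {D I : Finset Box} {g : Box → ℕ}
    (hI : IsIncreasingSubword D g I) (hg : StrictMonoOn g D) {a b : Box} (ha : a ∈ I)
    (hb : b ∈ I) (hab : a < b) : ¬ReadBefore b a := fun hba =>
  (hI.2 b hb a ha hba).not_gt (hg (hI.1 ha) (hI.1 hb) hab)

lemma card_le_LIS_of_injOn {D I : Finset Box} {g : Box → ℕ} (φ : Box → Box)
    (hmaps : ∀ a ∈ I, φ a ∈ D) (hinj : Set.InjOn φ I)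
    (hinc : ∀ a ∈ I, ∀ b ∈ I, ReadBefore (φ a) (φ b) → g (φ a) < g (φ b)) :
    I.card ≤ LIS D g := by
  rw [← Finset.card_image_of_injOn hinj]
  refine IsIncreasingSubword.card_le_LIS ⟨fun b hb => ?_, ?_⟩
  · obtain ⟨a, ha, rfl⟩ := Finset.mem_image.1 hb
    exact hmaps a ha
  · simpa only [Finset.forall_mem_image] using hinc

lemma readBefore_swap_iff {r c : ℕ} {a b : Box}
    (h : (a ≠ (r, c) ∧ b ≠ (r, c)) ∨ (a ≠ (r, c + 1) ∧ b ≠ (r, c + 1))) :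
    ReadBefore (Equiv.swap (r, c) (r, c + 1) a) (Equiv.swap (r, c) (r, c + 1) b) ↔
      ReadBefore a b := by
  obtain ⟨a1, a2⟩ := a
  obtain ⟨b1, b2⟩ := b
  simp only [ne_eq, Prod.mk.injEq] at h
  simp only [Equiv.swap_apply_def, Prod.mk.injEq]
  split_ifs <;> simp only [ReadBefore] <;> omega

lemma LIS_slideLeft {D : Finset Box} {g : Box → ℕ} {r c : ℕ} (hh : (r, c) ∉ D)
    (hm : (r, c + 1) ∈ D) :
    LIS (insert (r, c) (D.erase (r, c + 1))) (Function.update g (r, c) (g (r, c + 1))) =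
      LIS D g := by
  set σ := Equiv.swap ((r, c) : Box) (r, c + 1)
  set D' := insert (r, c) (D.erase (r, c + 1))
  set g' := Function.update g (r, c) (g (r, c + 1))
  have hne : ((r, c) : Box) ≠ (r, c + 1) := by simp
  have hD : ∀ a ∈ D, σ a ∈ D' ∧ a ≠ (r, c) ∧ g' (σ a) = g a := by
    intro a ha
    have hac : a ≠ (r, c) := ne_of_mem_of_not_mem ha hh
    by_cases ham : a = (r, c + 1)
    · subst ham; simp [σ, D', g']
    · simp [σ, D', g', Equiv.swap_apply_of_ne_of_ne hac ham, ham, ha, hac]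
  have hD' : ∀ a ∈ D', σ a ∈ D ∧ a ≠ (r, c + 1) ∧ g (σ a) = g' a := by
    intro a ha
    rcases Finset.mem_insert.1 ha with rfl | ha
    · simp [σ, g', hm, hne]
    · obtain ⟨ham, ha⟩ := Finset.mem_erase.1 ha
      have hac : a ≠ (r, c) := ne_of_mem_of_not_mem ha hh
      simp [σ, g', Equiv.swap_apply_of_ne_of_ne hac ham, ha, ham, hac]
  apply le_antisymm
  · refine LIS_le fun I hI => card_le_LIS_of_injOn σ (fun a ha => (hD' a (hI.1 ha)).1)
      σ.injective.injOn fun a ha b hb hab => ?_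
    obtain ⟨-, ham, hga⟩ := hD' a (hI.1 ha)
    obtain ⟨-, hbm, hgb⟩ := hD' b (hI.1 hb)
    rw [hga, hgb]
    exact hI.2 a ha b hb ((readBefore_swap_iff (.inr ⟨ham, hbm⟩)).1 hab)
  · refine LIS_le fun I hI => card_le_LIS_of_injOn σ (fun a ha => (hD a (hI.1 ha)).1)
      σ.injective.injOn fun a ha b hb hab => ?_
    obtain ⟨-, hac, hga⟩ := hD a (hI.1 ha)
    obtain ⟨-, hbc, hgb⟩ := hD b (hI.1 hb)
    rw [hga, hgb]
    exact hI.2 a ha b hb ((readBefore_swap_iff (.inl ⟨hac, hbc⟩)).1 hab)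

noncomputable def moveRow (r r' : ℕ) (p : ℕ → Prop) (b : Box) : Box :=
  if b.1 = r ∧ p b.2 then (r', b.2) else b

lemma moveRow_cases (r r' : ℕ) (p : ℕ → Prop) (b : Box) :
    (∃ j, p j ∧ b = (r, j) ∧ moveRow r r' p b = (r', j)) ∨
      (moveRow r r' p b = b ∧ ¬(b.1 = r ∧ p b.2)) := by
  by_cases hb : b.1 = r ∧ p b.2
  · exact .inl ⟨b.2, hb.2, Prod.ext hb.1 rfl, if_pos hb⟩
  · exact .inr ⟨if_neg hb, hb⟩

lemma injOn_moveRow {r r' : ℕ} {p : ℕ → Prop} {I : Finset Box}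
    (hI : ∀ j, p j → (r, j) ∈ I → (r', j) ∉ I) : Set.InjOn (moveRow r r' p) I := by
  intro a ha b hb hab
  simp only [Finset.mem_coe] at ha hb
  rcases moveRow_cases r r' p a with ⟨ja, hja, rfl, hφa⟩ | ⟨hφa, -⟩ <;>
    rcases moveRow_cases r r' p b with ⟨jb, hjb, rfl, hφb⟩ | ⟨hφb, -⟩ <;>
    rw [hφa, hφb] at hab
  · exact congrArg (Prod.mk r) (Prod.mk.inj hab).2
  · exact (hI ja hja ha (hab ▸ hb)).elim
  · exact (hI jb hjb hb (hab ▸ ha)).elim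
  · exact hab

structure IsTableauWithHole (S D : Finset Box) (g : Box → ℕ) (h : Box) : Prop where
  hole_not_mem : h ∉ D
  insert_hole : insert h D = S
  strictMonoOn : StrictMonoOn g D
  injOn : Set.InjOn g D

namespace IsTableauWithHole

variable {S D I : Finset Box} {g : Box → ℕ} {h : Box} {r c : ℕ}

lemma mem_of_le_of_le (H : IsTableauWithHole S D g h) (hS : (S : Set Box).OrdConnected)
    {a b z : Box} (ha : a ∈ insert h D) (hb : b ∈ insert h D) (haz : a ≤ z) (hzb : z ≤ b)
    (hzh : z ≠ h) : z ∈ D := by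
  rw [H.insert_hole] at ha hb
  have hz : z ∈ S := hS.out ha hb ⟨haz, hzb⟩
  rw [← H.insert_hole] at hz
  exact (Finset.mem_insert.1 hz).resolve_left hzh

lemma exists_succ_mem_le (H : IsTableauWithHole S D g h) (hS : (S : Set Box).OrdConnected)
    {b : Box} (hb : b ∈ D) (hhb : h < b) :
    ∃ s ∈ D, (s = (h.1 + 1, h.2) ∨ s = (h.1, h.2 + 1)) ∧ s ≤ b := by
  obtain ⟨s, hs, hhs, hsb⟩ := exists_succ_le_of_lt hhb
  have hsh : s ≠ h := by rcases hs with rfl | rfl <;> simp [Prod.ext_iff]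
  exact ⟨s, H.mem_of_le_of_le hS (Finset.mem_insert_self h D) (Finset.mem_insert_of_mem hb)
    hhs hsb hsh, hs, hsb⟩

lemma lt_of_succ_min (H : IsTableauWithHole S D g h) (hS : (S : Set Box).OrdConnected)
    {m : Box} (hm : m ∈ D)
    (hmin : ∀ s ∈ D, (s = (h.1 + 1, h.2) ∨ s = (h.1, h.2 + 1)) → g m ≤ g s) :
    ∀ b ∈ D, h < b → b ≠ m → g m < g b := by
  intro b hb hhb hbm
  obtain ⟨s, hs, hs', hsb⟩ := H.exists_succ_mem_le hS hb hhb
  rcases eq_or_lt_of_le hsb with rfl | hsb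
  · exact lt_of_le_of_ne (hmin s hs hs') fun he => hbm (H.injOn hm hs he).symm
  · exact (hmin s hs hs').trans_lt (H.strictMonoOn hs hb hsb)

lemma move (H : IsTableauWithHole S D g h) {m : Box} (hm : m ∈ D) (hhm : h < m)
    (hmin : ∀ b ∈ D, h < b → b ≠ m → g m < g b) :
    IsTableauWithHole S (insert h (D.erase m)) (Function.update g h (g m)) m := by
  have hmem : ∀ {a}, a ∈ insert h (D.erase m) ↔ a = h ∨ (a ≠ m ∧ a ∈ D) := by
    simp only [Finset.mem_insert, Finset.mem_erase, implies_true]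
  have hne : ∀ {a}, a ∈ D → a ≠ h := fun ha => ne_of_mem_of_not_mem ha H.hole_not_mem
  refine ⟨?_, ?_, ?_, ?_⟩
  · simp [hmem, hhm.ne']
  · rw [Finset.insert_comm, Finset.insert_erase hm, H.insert_hole]
  · intro a ha b hb hab
    rcases hmem.1 ha with rfl | ⟨ham, haD⟩ <;> rcases hmem.1 hb with rfl | ⟨hbm, hbD⟩
    · exact absurd hab (lt_irrefl _)
    · simpa [hne hbD] using hmin b hbD hab hbm
    · simpa [hne haD] using H.strictMonoOn haD hm (hab.trans hhm)
    · simpa [hne haD, hne hbD] using H.strictMonoOn haD hbD hab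
  · intro a ha b hb hab
    rcases hmem.1 ha with rfl | ⟨ham, haD⟩ <;> rcases hmem.1 hb with rfl | ⟨hbm, hbD⟩
    · rfl
    · simp only [Function.update_self, Function.update_of_ne (hne hbD)] at hab
      exact absurd (H.injOn hm hbD hab).symm hbm
    · simp only [Function.update_self, Function.update_of_ne (hne haD)] at hab
      exact absurd (H.injOn haD hm hab) ham
    · simpa [hne haD, hne hbD] using H.injOn haD hbD (by simpa [hne haD, hne hbD] using hab)

lemma slideUp_bounds_right (H : IsTableauWithHole S D g (r, c)) (hS : (S : Set Box).OrdConnected)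
    (hmin : ∀ b ∈ D, (r, c) < b → b ≠ (r + 1, c) → g (r + 1, c) < g b)
    {j : ℕ} (hj : c ≤ j) (hjD : (r + 1, j) ∈ D) :
    (r, j) ∈ insert (r, c) (D.erase (r + 1, c)) ∧
      g (r + 1, c) ≤ Function.update g (r, c) (g (r + 1, c)) (r, j) ∧
      Function.update g (r, c) (g (r + 1, c)) (r, j) ≤ g (r + 1, j) := by
  rcases eq_or_lt_of_le hj with rfl | hj
  · simp
  have hjD' : ((r, j) : Box) ∈ D := H.mem_of_le_of_le hS (Finset.mem_insert_self _ _)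
    (Finset.mem_insert_of_mem hjD) (show ((r, c) : Box) ≤ (r, j) from ⟨le_rfl, hj.le⟩)
    lt_below.le (by simp; omega)
  have hjc : ((r, j) : Box) ≠ (r, c) := by simp; omega
  simp only [Finset.mem_insert, Finset.mem_erase, Function.update_of_ne hjc]
  refine ⟨.inr ⟨by simp, hjD'⟩, (hmin _ hjD' ?_ (by simp)).le,
    (H.strictMonoOn hjD' hjD lt_below).le⟩
  exact lt_of_le_of_ne ⟨le_rfl, hj.le⟩ hjc.symm

lemma slideUp_bounds_left (H : IsTableauWithHole S D g (r, c)) (hS : (S : Set Box).OrdConnected)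
    (hm : (r + 1, c) ∈ D) {j : ℕ} (hj : j ≤ c)
    (hjD : (r, j) ∈ insert (r, c) (D.erase (r + 1, c))) :
    (r + 1, j) ∈ D ∧ Function.update g (r, c) (g (r + 1, c)) (r, j) ≤ g (r + 1, j) ∧
      g (r + 1, j) ≤ g (r + 1, c) := by
  rcases eq_or_lt_of_le hj with rfl | hj
  · simpa using hm
  have hjc : ((r, j) : Box) ≠ (r, c) := by simp; omega
  have hjD' : ((r, j) : Box) ∈ D :=
    (Finset.mem_erase.1 ((Finset.mem_insert.1 hjD).resolve_left hjc)).2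
  have hjD'' : ((r + 1, j) : Box) ∈ D := H.mem_of_le_of_le hS (Finset.mem_insert_of_mem hjD')
    (Finset.mem_insert_of_mem hm) lt_below.le (show ((r + 1, j) : Box) ≤ (r + 1, c) from
      ⟨le_rfl, hj.le⟩) (by simp)
  rw [Function.update_of_ne hjc]
  exact ⟨hjD'', (H.strictMonoOn hjD' hjD'' lt_below).le,
    (H.strictMonoOn hjD'' hm (lt_of_le_of_ne ⟨le_rfl, hj.le⟩ (by simp; omega))).le⟩

lemma card_le_LIS_slideUp (H : IsTableauWithHole S D g (r, c)) (hS : (S : Set Box).OrdConnected)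
    (hm : (r + 1, c) ∈ D)
    (hmin : ∀ b ∈ D, (r, c) < b → b ≠ (r + 1, c) → g (r + 1, c) < g b)
    (hI : IsIncreasingSubword D g I) (hmI : (r + 1, c) ∈ I) :
    I.card ≤
      LIS (insert (r, c) (D.erase (r + 1, c))) (Function.update g (r, c) (g (r + 1, c))) := by
  set D' := insert (r, c) (D.erase (r + 1, c))
  set g' := Function.update g (r, c) (g (r + 1, c))
  have H' := H.move hm lt_below hmin
  have hbounds : ∀ {j}, c ≤ j → (r + 1, j) ∈ I →
      (r, j) ∈ D' ∧ g (r + 1, c) ≤ g' (r, j) ∧ g' (r, j) ≤ g (r + 1, j) :=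
    fun hj hjI => H.slideUp_bounds_right hS hmin hj (hI.1 hjI)
  have hfix (a) (ha : a ∈ I) (hna : ¬(a.1 = r + 1 ∧ c ≤ a.2)) : a ∈ D' ∧ g' a = g a :=
    ⟨Finset.mem_insert_of_mem (Finset.mem_erase.2 ⟨fun he => hna (by simp [he]), hI.1 ha⟩),
      Function.update_of_ne (ne_of_mem_of_not_mem (hI.1 ha) H.hole_not_mem) _ _⟩
  refine card_le_LIS_of_injOn (moveRow (r + 1) r (c ≤ ·)) (fun a ha => ?_)
    (injOn_moveRow fun j _ h1 h2 =>
      hI.not_readBefore_of_lt H.strictMonoOn h2 h1 lt_below readBefore_below)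
    (fun a ha b hb hab => ?_)
  · rcases moveRow_cases (r + 1) r (c ≤ ·) a with ⟨j, hj, rfl, hφa⟩ | ⟨hφa, hna⟩ <;>
      rw [hφa]
    exacts [(hbounds hj ha).1, (hfix a ha hna).1]
  rcases moveRow_cases (r + 1) r (c ≤ ·) a with ⟨ja, hja, rfl, hφa⟩ | ⟨hφa, hna⟩ <;>
    rcases moveRow_cases (r + 1) r (c ≤ ·) b with ⟨jb, hjb, rfl, hφb⟩ | ⟨hφb, hnb⟩ <;>
    rw [hφa, hφb] at hab ⊢
  · have hjab : ja < jb := by simp only [ReadBefore] at hab; omega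
    exact H'.strictMonoOn (hbounds hja ha).1 (hbounds hjb hb).1
      (lt_of_le_of_ne ⟨le_rfl, hjab.le⟩ (by simp; omega))
  · have := hI.2 _ ha b hb (by simp only [ReadBefore] at hab ⊢; omega)
    have := (hbounds hja ha).2.2
    have := (hfix b hb hnb).2
    omega
  · obtain ⟨haD, hga⟩ := hfix a ha hna
    obtain ⟨a1, a2⟩ := a
    simp only [ReadBefore] at hab
    by_cases ha1 : a1 = r
    · subst ha1
      exact H'.strictMonoOn haD (hbounds hjb hb).1
        (lt_of_le_of_ne ⟨by simp, by simp; omega⟩ (by simp; omega))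
    · have := hI.2 _ ha _ hmI (by simp only [ReadBefore] at hna ⊢; omega)
      have := (hbounds hjb hb).2.1
      omega
  · rw [(hfix a ha hna).2, (hfix b hb hnb).2]
    exact hI.2 a ha b hb hab

lemma card_slideUp_le_LIS (H : IsTableauWithHole S D g (r, c)) (hS : (S : Set Box).OrdConnected)
    (hm : (r + 1, c) ∈ D)
    (hmin : ∀ b ∈ D, (r, c) < b → b ≠ (r + 1, c) → g (r + 1, c) < g b)
    (hI : IsIncreasingSubword (insert (r, c) (D.erase (r + 1, c)))
      (Function.update g (r, c) (g (r + 1, c))) I) (hhI : (r, c) ∈ I) :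
    I.card ≤ LIS D g := by
  set g' := Function.update g (r, c) (g (r + 1, c))
  have H' := H.move hm lt_below hmin
  have hbounds : ∀ {j}, j ≤ c → (r, j) ∈ I →
      (r + 1, j) ∈ D ∧ g' (r, j) ≤ g (r + 1, j) ∧ g (r + 1, j) ≤ g (r + 1, c) :=
    fun hj hjI => H.slideUp_bounds_left hS hm hj (hI.1 hjI)
  have hfix (a) (ha : a ∈ I) (hna : ¬(a.1 = r ∧ a.2 ≤ c)) : a ∈ D ∧ g' a = g a :=
    have hah : a ≠ (r, c) := fun he => hna (by simp [he])
    ⟨(Finset.mem_erase.1 ((Finset.mem_insert.1 (hI.1 ha)).resolve_left hah)).2,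
      Function.update_of_ne hah _ _⟩
  refine card_le_LIS_of_injOn (moveRow r (r + 1) (· ≤ c)) (fun a ha => ?_)
    (injOn_moveRow fun j _ h1 h2 =>
      hI.not_readBefore_of_lt H'.strictMonoOn h1 h2 lt_below readBefore_below)
    (fun a ha b hb hab => ?_)
  · rcases moveRow_cases r (r + 1) (· ≤ c) a with ⟨j, hj, rfl, hψa⟩ | ⟨hψa, hna⟩ <;>
      rw [hψa]
    exacts [(hbounds hj ha).1, (hfix a ha hna).1]
  rcases moveRow_cases r (r + 1) (· ≤ c) a with ⟨ja, hja, rfl, hψa⟩ | ⟨hψa, hna⟩ <;>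
    rcases moveRow_cases r (r + 1) (· ≤ c) b with ⟨jb, hjb, rfl, hψb⟩ | ⟨hψb, hnb⟩ <;>
    rw [hψa, hψb] at hab ⊢
  · have hjab : ja < jb := by simp only [ReadBefore] at hab; omega
    exact H.strictMonoOn (hbounds hja ha).1 (hbounds hjb hb).1
      (lt_of_le_of_ne ⟨le_rfl, hjab.le⟩ (by simp; omega))
  · obtain ⟨hbD, hgb⟩ := hfix b hb hnb
    obtain ⟨b1, b2⟩ := b
    simp only [ReadBefore] at hab
    by_cases hb1 : b1 = r + 1
    · subst hb1
      exact H.strictMonoOn (hbounds hja ha).1 hbD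
        (lt_of_le_of_ne ⟨le_rfl, by simp; omega⟩ (by simp; omega))
    · have h1 := hI.2 _ hhI _ hb (by simp only [ReadBefore] at hnb ⊢; omega)
      have h2 := (hbounds hja ha).2.2
      rw [hgb, show g' (r, c) = g (r + 1, c) from Function.update_self _ _ _] at h1
      omega
  · have := hI.2 a ha _ hb (by simp only [ReadBefore] at hab ⊢; omega)
    have := (hbounds hjb hb).2.1
    have := (hfix a ha hna).2
    omega
  · rw [← (hfix a ha hna).2, ← (hfix b hb hnb).2]
    exact hI.2 a ha b hb hab

lemma LIS_slideUp (H : IsTableauWithHole S D g (r, c)) (hS : (S : Set Box).OrdConnected)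
    (hm : (r + 1, c) ∈ D)
    (hmin : ∀ b ∈ D, (r, c) < b → b ≠ (r + 1, c) → g (r + 1, c) < g b) :
    LIS (insert (r, c) (D.erase (r + 1, c))) (Function.update g (r, c) (g (r + 1, c))) =
      LIS D g := by
  have hg' : ∀ b ∈ D, Function.update g (r, c) (g (r + 1, c)) b = g b := fun b hb =>
    Function.update_of_ne (ne_of_mem_of_not_mem hb H.hole_not_mem) _ _
  apply le_antisymm <;> refine LIS_le fun I hI => ?_
  · by_cases hhI : (r, c) ∈ I
    · exact H.card_slideUp_le_LIS hS hm hmin hI hhI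
    have hID : I ⊆ D := fun b hb =>
      (Finset.mem_erase.1 ((Finset.mem_insert.1 (hI.1 hb)).resolve_left
        (ne_of_mem_of_not_mem hb hhI))).2
    exact (hI.of_eqOn hID fun a ha => (hg' a (hID ha)).symm).card_le_LIS
  · by_cases hmI : (r + 1, c) ∈ I
    · exact H.card_le_LIS_slideUp hS hm hmin hI hmI
    exact (hI.of_eqOn (fun b hb => Finset.mem_insert_of_mem
      (Finset.mem_erase.2 ⟨ne_of_mem_of_not_mem hb hmI, hI.1 hb⟩))
      fun a ha => hg' a (hI.1 ha)).card_le_LIS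

lemma holeMove_spec (H : IsTableauWithHole S D g h) (hS : (S : Set Box).OrdConnected) :
    IsTableauWithHole S (holeMove (D, g, h)).1 (holeMove (D, g, h)).2.1 (holeMove (D, g, h)).2.2 ∧
      LIS (holeMove (D, g, h)).1 (holeMove (D, g, h)).2.1 = LIS D g := by
  obtain ⟨r, c⟩ := h
  have moveRight (hR : (r, c + 1) ∈ D)
      (hmin : ∀ s ∈ D, (s = (r + 1, c) ∨ s = (r, c + 1)) → g (r, c + 1) ≤ g s) :
      IsTableauWithHole S (insert (r, c) (D.erase (r, c + 1)))
        (Function.update g (r, c) (g (r, c + 1))) (r, c + 1) ∧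
      LIS (insert (r, c) (D.erase (r, c + 1))) (Function.update g (r, c) (g (r, c + 1))) =
        LIS D g :=
    ⟨H.move hR lt_right (H.lt_of_succ_min hS hR hmin), LIS_slideLeft H.hole_not_mem hR⟩
  have moveDown (hD : (r + 1, c) ∈ D)
      (hmin : ∀ s ∈ D, (s = (r + 1, c) ∨ s = (r, c + 1)) → g (r + 1, c) ≤ g s) :
      IsTableauWithHole S (insert (r, c) (D.erase (r + 1, c)))
        (Function.update g (r, c) (g (r + 1, c))) (r + 1, c) ∧
      LIS (insert (r, c) (D.erase (r + 1, c))) (Function.update g (r, c) (g (r + 1, c))) =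
        LIS D g :=
    ⟨H.move hD lt_below (H.lt_of_succ_min hS hD hmin),
      H.LIS_slideUp hS hD (H.lt_of_succ_min hS hD hmin)⟩
  simp only [holeMove]
  split_ifs with hR hD hlt hD
  · exact moveRight hR (by rintro s - (rfl | rfl) <;> simp [hlt.le])
  · exact moveDown hD (by rintro s - (rfl | rfl) <;> simp [not_lt.1 hlt])
  · exact moveRight hR (by rintro s hs (rfl | rfl) <;> simp_all)
  · exact moveDown hD (by rintro s hs (rfl | rfl) <;> simp_all)
  · exact ⟨H, rfl⟩

lemma iterate_holeMove (H : IsTableauWithHole S D g h)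
    (hS : (S : Set Box).OrdConnected) (n : ℕ) :
    IsTableauWithHole S (holeMove^[n] (D, g, h)).1 (holeMove^[n] (D, g, h)).2.1
        (holeMove^[n] (D, g, h)).2.2 ∧
      LIS (holeMove^[n] (D, g, h)).1 (holeMove^[n] (D, g, h)).2.1 = LIS D g := by
  induction n with
  | zero => exact ⟨H, rfl⟩
  | succ n ih =>
    rw [Function.iterate_succ_apply']
    obtain ⟨H', hLIS⟩ := ih
    exact ⟨(H'.holeMove_spec hS).1, (H'.holeMove_spec hS).2.trans hLIS⟩

end IsTableauWithHole

theorem stmt19_general (lam nu : Finset Box) (f : Box → ℕ) (x : Box)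
    (hlam : IsYoung lam) (hnu : IsYoung nu)
    (hT : IsSYT (nu \ lam) f) (hx : InnerCorner lam x) :
    LIS (jdt x (nu \ lam) f).1 (jdt x (nu \ lam) f).2 = LIS (nu \ lam) f := by
  have hskew : (↑(nu \ lam) : Set Box).OrdConnected := by
    rw [Finset.coe_sdiff]
    exact hnu.isLowerSet.ordConnected_sdiff hlam.isLowerSet
  have H : IsTableauWithHole (insert x (nu \ lam)) (nu \ lam) f x :=
    ⟨fun hx' => (Finset.mem_sdiff.1 hx').2 hx.1, rfl, hT.1.1.strictMonoOn hskew,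
      fun a ha b hb => hT.2 a ha b hb⟩
  exact (H.iterate_holeMove (ordConnected_insert_innerCorner hlam hnu hx) _).2

/-- an ordinary jeu de taquin slide of a standard Young tableau
preserves the length of the longest strictly increasing subsequence of the
reading word. -/
theorem stmt19 (lam nu : Finset Box) (f : Box → ℕ) (x : Box)
    (hlam : IsYoung lam) (hnu : IsYoung nu) (hsub : lam ⊆ nu)
    (hT : IsSYT (nu \ lam) f) (hx : InnerCorner lam x) :
    LIS (jdt x (nu \ lam) f).1 (jdt x (nu \ lam) f).2 = LIS (nu \ lam) f :=
  stmt19_general lam nu f x hlam hnu hT hx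
end
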